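/- arXiv:1606.07489 — 4 statements merged into one kernel-verified Lean document; each statement's English description precedes it below -/
import Mathlib

section
/- Let A and B be countable structures (structures in countable relational languages with domain ω). Every continuous group homomorphism from Aut(B) to Aut(A) is of the form G_I for some infinitary interpretation I of A in B. -/
namespace Paper

/-- A structure in a (countable) relational language with arity function `L`,
with domain `ω`.  `rel i` is the interpretation of the `i`-th relation symbol,
of arity `L i`. -/
structure Str (L : ℕ → ℕ) where
  rel : ∀ i, (Fin (L i) → ℕ) → Bool

/-- `g` is an isomorphism from `M` to `N`. -/
def IsIso {L : ℕ → ℕ} (M N : Str L) (g : ℕ ≃ ℕ) : Prop :=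
  ∀ i (v : Fin (L i) → ℕ), M.rel i v = N.rel i fun k => g (v k)

theorem isIso_refl {L : ℕ → ℕ} (M : Str L) : IsIso M M (Equiv.refl ℕ) := fun _ _ => rfl

/-- The automorphism group of `M`, as a subgroup of `S_∞ = Equiv.Perm ℕ`. -/
def aut {L : ℕ → ℕ} (M : Str L) : Subgroup (Equiv.Perm ℕ) where
  carrier := {g | IsIso M M g}
  one_mem' := isIso_refl M
  mul_mem' := by
    intro a b ha hb i v
    exact (hb i v).trans (ha i fun k => b (v k))
  inv_mem' := by
    intro a ha i v
    have h := ha i fun k => a⁻¹ (v k)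
    simpa using h.symm

theorem mem_aut {L : ℕ → ℕ} {M : Str L} {g : Equiv.Perm ℕ} (h : g ∈ aut M) : IsIso M M g := h

/-- The topology of pointwise convergence on `S_∞ = Equiv.Perm ℕ`, i.e. the topology
induced from Baire space `ω^ω`; automorphism groups of countable structures carry the
subspace topology. -/
instance : TopologicalSpace (Equiv.Perm ℕ) :=
  TopologicalSpace.induced (fun g => (g : ℕ → ℕ)) inferInstance

end Paper
namespace Paper

/-- An infinitary interpretation of `A` in `B` (Definition 1.1 of the paper).
The domain `Dom ⊆ B^{<ω}`, the equivalence relation `eqv` and the relations `R i`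
are required to be `L_{ω₁ω}`-definable without parameters in `B`; for countable
structures this is equivalent to invariance under all automorphisms of `B`
(acting coordinatewise on tuples), which is how definability is rendered here.
`F` is the map `f^B_A : Dom → A` inducing an isomorphism
`(Dom/∼; R₀/∼, R₁/∼, …) ≅ (A; P₀^A, P₁^A, …)`. -/
structure Interp {LA LB : ℕ → ℕ} (A : Str LA) (B : Str LB) where
  Dom : Set (List ℕ)
  eqv : List ℕ → List ℕ → Prop
  R : ∀ i, (Fin (LA i) → List ℕ) → Prop
  F : List ℕ → ℕ
  dom_inv : ∀ g ∈ aut B, ∀ l ∈ Dom, List.map (⇑g) l ∈ Dom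
  eqv_inv : ∀ g ∈ aut B, ∀ l₁ ∈ Dom, ∀ l₂ ∈ Dom,
    eqv l₁ l₂ → eqv (List.map (⇑g) l₁) (List.map (⇑g) l₂)
  R_inv : ∀ i, ∀ g ∈ aut B, ∀ v : Fin (LA i) → List ℕ,
    (∀ k, v k ∈ Dom) → R i v → R i fun k => List.map (⇑g) (v k)
  eqv_refl : ∀ l ∈ Dom, eqv l l
  eqv_symm : ∀ l₁ ∈ Dom, ∀ l₂ ∈ Dom, eqv l₁ l₂ → eqv l₂ l₁
  eqv_trans : ∀ l₁ ∈ Dom, ∀ l₂ ∈ Dom, ∀ l₃ ∈ Dom, eqv l₁ l₂ → eqv l₂ l₃ → eqv l₁ l₃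
  R_resp : ∀ i, ∀ v w : Fin (LA i) → List ℕ, (∀ k, v k ∈ Dom) → (∀ k, w k ∈ Dom) →
    (∀ k, eqv (v k) (w k)) → R i v → R i w
  F_surj : ∀ a : ℕ, ∃ l ∈ Dom, F l = a
  F_eqv : ∀ l₁ ∈ Dom, ∀ l₂ ∈ Dom, (F l₁ = F l₂ ↔ eqv l₁ l₂)
  F_rel : ∀ i, ∀ v : Fin (LA i) → List ℕ, (∀ k, v k ∈ Dom) →
    (R i v ↔ A.rel i (fun k => F (v k)) = true)

end Paper
namespace Paper

/-! By continuity of `H`, each `a ∈ A` has a finite support `s̄_a ⊆ B`: every automorphism of `B`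
fixing `s̄_a` pointwise is sent to one fixing `a`, so `H(g)(a)` depends only on `g ↾ s̄_a`. Padding
`s̄_a` with zeros to a length that encodes `a` makes the orbits of different supports disjoint, so
`g(s̄_a) ↦ H(g)(a)` is a well-defined map on the union of these `Aut(B)`-orbits. It is
equivariant, and pulling back equality and the relations of `A` along it gives the
interpretation. -/

open Equiv Filter Topology

section Supports

variable {G K : Subgroup (Perm ℕ)}

theorem exists_finset_fix_subset_of_mem_nhds_one {U : Set G} (hU : U ∈ 𝓝 1) :
    ∃ s : Finset ℕ, ∀ g : G, (∀ x ∈ s, (g : Perm ℕ) x = x) → g ∈ U := by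
  have hind : IsInducing fun g : G => ((g : Perm ℕ) : ℕ → ℕ) :=
    (IsInducing.induced _).comp IsInducing.subtypeVal
  obtain ⟨V, hV, hVU⟩ := mem_comap.mp (hind.nhds_eq_comap 1 ▸ hU)
  rw [nhds_pi, mem_pi'] at hV
  obtain ⟨s, t, ht, hsV⟩ := hV
  refine ⟨s, fun g hg => hVU (hsV fun x hx => ?_)⟩
  simpa [hg x hx] using mem_of_mem_nhds (ht x)

def Supports (H : G →* K) (s : List ℕ) (a : ℕ) : Prop :=
  ∀ g : G, (∀ x ∈ s, (g : Perm ℕ) x = x) → (H g : Perm ℕ) a = a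

theorem exists_supports (H : G →* K)
    (hH : Continuous fun g : G => ((H g : Perm ℕ) : ℕ → ℕ)) (a : ℕ) :
    ∃ s : List ℕ, Supports H s a := by
  have hopen : IsOpen {g : G | (H g : Perm ℕ) a = a} :=
    (isOpen_discrete {a}).preimage ((continuous_apply a).comp hH)
  obtain ⟨s, hs⟩ := exists_finset_fix_subset_of_mem_nhds_one (hopen.mem_nhds (by simp))
  exact ⟨s.toList, fun g hg => hs g fun x hx => hg x (Finset.mem_toList.mpr hx)⟩

theorem Supports.mono {H : G →* K} {s s' : List ℕ} {a : ℕ} (hs : Supports H s a) (h : s ⊆ s') :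
    Supports H s' a :=
  fun g hg => hs g fun x hx => hg x (h hx)

theorem Supports.apply_eq {H : G →* K} {s : List ℕ} {a : ℕ} (hs : Supports H s a) {g g' : G}
    (hgg' : ∀ x ∈ s, (g : Perm ℕ) x = (g' : Perm ℕ) x) :
    (H g : Perm ℕ) a = (H g' : Perm ℕ) a := by
  have hfix : (H (g'⁻¹ * g) : Perm ℕ) a = a := hs _ fun x hx => by simp [hgg' x hx]
  calc (H g : Perm ℕ) a = (H (g' * (g'⁻¹ * g)) : Perm ℕ) a := by rw [mul_inv_cancel_left]
    _ = (H g' : Perm ℕ) ((H (g'⁻¹ * g) : Perm ℕ) a) := by simp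
    _ = (H g' : Perm ℕ) a := by rw [hfix]

end Supports

section Padding

def padTuple (s : ℕ → List ℕ) (a : ℕ) : List ℕ :=
  (s a).rightpad (Nat.pair a (s a).length) 0

variable (s : ℕ → List ℕ)

theorem length_padTuple (a : ℕ) : (padTuple s a).length = Nat.pair a (s a).length := by
  simp [padTuple, Nat.right_le_pair]

theorem padTuple_length_injective : Function.Injective fun a => (padTuple s a).length :=
  fun a a' h => (Nat.pair_eq_pair.mp (by simpa only [length_padTuple] using h)).1

theorem subset_padTuple (a : ℕ) : s a ⊆ padTuple s a :=
  List.subset_append_left _ _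

end Padding

section Orbits

variable {G K : Subgroup (Perm ℕ)}

def tupleOrbits (G : Subgroup (Perm ℕ)) (s : ℕ → List ℕ) : Set (List ℕ) :=
  {l | ∃ (a : ℕ) (g : G), l = (s a).map (g : Perm ℕ)}

theorem map_mem_tupleOrbits {s : ℕ → List ℕ} (g : G) {l : List ℕ} (hl : l ∈ tupleOrbits G s) :
    l.map (g : Perm ℕ) ∈ tupleOrbits G s := by
  obtain ⟨a, h, rfl⟩ := hl
  exact ⟨a, g * h, by simp [Function.comp_def]⟩

/-- The map `g(s a) ↦ H(g)(a)` on `tupleOrbits G s`, with junk value `0` off it. -/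
noncomputable def orbitLabel (H : G →* K) (s : ℕ → List ℕ) (l : List ℕ) : ℕ :=
  open Classical in
  if h : ∃ (a : ℕ) (g : G), l = (s a).map (g : Perm ℕ) then
    (H h.choose_spec.choose : Perm ℕ) h.choose
  else 0

variable (H : G →* K) {s : ℕ → List ℕ}
  (hs : ∀ (a a' : ℕ) (g g' : G), (s a).map (g : Perm ℕ) = (s a').map (g' : Perm ℕ) →
    (H g : Perm ℕ) a = (H g' : Perm ℕ) a')
include hs

theorem orbitLabel_map_apply (a : ℕ) (g : G) :
    orbitLabel H s ((s a).map (g : Perm ℕ)) = (H g : Perm ℕ) a := by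
  have h : ∃ (a' : ℕ) (g' : G), (s a).map (g : Perm ℕ) = (s a').map (g' : Perm ℕ) := ⟨a, g, rfl⟩
  rw [orbitLabel, dif_pos h]
  exact hs _ _ _ _ h.choose_spec.choose_spec.symm

theorem orbitLabel_map (g : G) {l : List ℕ} (hl : l ∈ tupleOrbits G s) :
    orbitLabel H s (l.map (g : Perm ℕ)) = (H g : Perm ℕ) (orbitLabel H s l) := by
  obtain ⟨a, h, rfl⟩ := hl
  have hgh : ((s a).map (h : Perm ℕ)).map (g : Perm ℕ) = (s a).map ((g * h : G) : Perm ℕ) := by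
    simp [Function.comp_def]
  rw [hgh, orbitLabel_map_apply H hs, orbitLabel_map_apply H hs, map_mul]
  rfl

theorem exists_mem_tupleOrbits_orbitLabel_eq (a : ℕ) :
    ∃ l ∈ tupleOrbits G s, orbitLabel H s l = a :=
  ⟨(s a).map ((1 : G) : Perm ℕ), ⟨a, 1, rfl⟩, by rw [orbitLabel_map_apply H hs]; simp⟩

end Orbits

theorem apply_eq_of_map_padTuple_eq {G K : Subgroup (Perm ℕ)} {H : G →* K} {s : ℕ → List ℕ}
    (hs : ∀ a, Supports H (s a) a) (a a' : ℕ) (g g' : G)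
    (h : (padTuple s a).map (g : Perm ℕ) = (padTuple s a').map (g' : Perm ℕ)) :
    (H g : Perm ℕ) a = (H g' : Perm ℕ) a' := by
  obtain rfl : a = a' := padTuple_length_injective s (by simpa using congrArg List.length h)
  exact ((hs a).mono (subset_padTuple s a)).apply_eq (List.map_inj_left.mp h)

def Interp.ofEquivariant {LA LB : ℕ → ℕ} {A : Str LA} {B : Str LB} (H : aut B →* aut A)
    (D : Set (List ℕ)) (F : List ℕ → ℕ)
    (hD : ∀ g : aut B, ∀ l ∈ D, l.map (g : Perm ℕ) ∈ D)
    (hF : ∀ g : aut B, ∀ l ∈ D, F (l.map (g : Perm ℕ)) = (H g : Perm ℕ) (F l))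
    (hsurj : ∀ a, ∃ l ∈ D, F l = a) : Interp A B where
  Dom := D
  eqv l₁ l₂ := F l₁ = F l₂
  R i v := A.rel i (fun k => F (v k)) = true
  F := F
  dom_inv g hg := hD ⟨g, hg⟩
  eqv_inv g hg l₁ h₁ l₂ h₂ h := by
    simp only [hF ⟨g, hg⟩ l₁ h₁, hF ⟨g, hg⟩ l₂ h₂, h]
  R_inv i g hg v hv hR := by
    simp only [hF ⟨g, hg⟩ _ (hv _)]
    rwa [← mem_aut (H ⟨g, hg⟩).2 i]
  eqv_refl _ _ := rfl
  eqv_symm _ _ _ _ := Eq.symm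
  eqv_trans _ _ _ _ _ _ := Eq.trans
  R_resp i v w _ _ h hR := by
    simpa only [h] using hR
  F_surj := hsurj
  F_eqv _ _ _ _ := Iff.rfl
  F_rel _ _ _ := Iff.rfl

/-- **Theorem 1.3.** Let `A` and `B` be countable structures.  Every continuous
homomorphism from `Aut(B)` into `Aut(A)` is of the form `G_I` for some infinitary
interpretation `I` of `A` in `B`, i.e. `H(g) = f^B_A ∘ g̃ ∘ (f^B_A)⁻¹` where `g̃` is
the action of `g` on tuples; equivalently `H(g)(f^B_A(l)) = f^B_A(g̃(l))` for every
`l` in the domain of the interpretation. -/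
theorem homo_to_interp (LA LB : ℕ → ℕ) (A : Str LA) (B : Str LB)
    (H : ↥(aut B) →* ↥(aut A))
    (hcont : Continuous fun g : ↥(aut B) => ((H g : Equiv.Perm ℕ) : ℕ → ℕ)) :
    ∃ I : Interp A B, ∀ (g : ↥(aut B)), ∀ l ∈ I.Dom,
      (H g : Equiv.Perm ℕ) (I.F l) = I.F (List.map (⇑(g : Equiv.Perm ℕ)) l) := by
  choose s hs using exists_supports H hcont
  have hlabel := apply_eq_of_map_padTuple_eq hs
  exact ⟨Interp.ofEquivariant H (tupleOrbits (aut B) (padTuple s)) (orbitLabel H (padTuple s))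
      (fun g _ => map_mem_tupleOrbits g) (fun g _ => orbitLabel_map H hlabel g)
      (exists_mem_tupleOrbits_orbitLabel_eq H hlabel),
    fun g _ hl => (orbitLabel_map H hlabel g hl).symm⟩

end Paper
end

section
/- Let A be a countable structure. The following are equivalent: (1) there is a continuous group homomorphism from Aut(A) onto S_∞; (2) there are an n ∈ ω, a subset D ⊆ A^n definable without parameters by an L_{ω₁ω} formula (equivalently, invariant under all automorphisms of A), and an L_{ω₁ω}-definable (equivalently, automorphism-invariant) equivalence relation E ⊆ D² with infinitely many equivalence classes, such that the E-equivalence classes are absolutely indiscernible, i.e., every permutation of the set of E-equivalence classes extends to an automorphism of A. -/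
/-!
A continuous homomorphism `H : Aut(A) → S_∞` has an open stabiliser of `0`, which therefore
contains the pointwise stabiliser of some tuple `ā`. Then `g • ā ↦ H g 0` is a well-defined
equivariant map from the orbit `D` of `ā` onto `ω`, and its fibres are absolutely indiscernible
classes because `H` is onto. Conversely, `Aut(A)` acts on the countably infinite set `D / E`;
the stabiliser of a class contains the stabiliser of any tuple in it, which makes the action
continuous, and absolute indiscernibility says exactly that the action is onto `Sym(D / E) ≅ S_∞`.
-/

namespace Paper

open Function Set Equiv MulAction Topology

structure AbsolutelyIndiscernibleClasses (G : Type*) {X : Type*} [Monoid G] [MulAction G X]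
    (D : Set X) (E : X → X → Prop) : Prop where
  smul_mem : ∀ g : G, ∀ v ∈ D, g • v ∈ D
  rel_smul : ∀ g : G, ∀ v ∈ D, ∀ w ∈ D, E v w → E (g • v) (g • w)
  refl : ∀ v ∈ D, E v v
  symm : ∀ v ∈ D, ∀ w ∈ D, E v w → E w v
  trans : ∀ v ∈ D, ∀ w ∈ D, ∀ u ∈ D, E v w → E w u → E v u
  infinite : ∃ r : ℕ → X, (∀ k, r k ∈ D) ∧ ∀ k l : ℕ, k ≠ l → ¬E (r k) (r l)
  exists_smul : ∀ π : X → X, (∀ v ∈ D, π v ∈ D) → (∀ v ∈ D, ∀ w ∈ D, (E v w ↔ E (π v) (π w))) →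
    (∀ w ∈ D, ∃ v ∈ D, E (π v) w) → ∃ g : G, ∀ v ∈ D, E (g • v) (π v)

section

variable {G X β : Type*}

theorem exists_perm_apply_eq {φ : X → β} {D : Set X} (hφ : SurjOn φ D univ) {π : X → X}
    (hπ : ∀ v ∈ D, ∀ w ∈ D, φ v = φ w ↔ φ (π v) = φ (π w))
    (hπ_surj : ∀ w ∈ D, ∃ v ∈ D, φ (π v) = φ w) :
    ∃ σ : Perm β, ∀ v ∈ D, σ (φ v) = φ (π v) := by
  choose r hrD hr using fun b => hφ (mem_univ b)
  have key : ∀ v ∈ D, φ (π (r (φ v))) = φ (π v) := fun v hv =>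
    ((hπ _ (hrD _) v hv).1 (hr _))
  have inj : Injective fun b => φ (π (r b)) := fun b c hbc => by
    simpa only [hr] using (hπ _ (hrD b) _ (hrD c)).2 hbc
  have surj : Surjective fun b => φ (π (r b)) := fun b => by
    obtain ⟨v, hv, hvb⟩ := hπ_surj (r b) (hrD b)
    exact ⟨φ v, (key v hv).trans (hvb.trans (hr b))⟩
  exact ⟨Equiv.ofBijective _ ⟨inj, surj⟩, key⟩

theorem absolutelyIndiscernibleClasses_of_equivariant [Monoid G] [MulAction G X]
    {ρ : G →* Perm ℕ} (hρ : Surjective ρ) {D : Set X} (hD : ∀ g : G, ∀ v ∈ D, g • v ∈ D)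
    {φ : X → ℕ} (hφ : ∀ g : G, ∀ v ∈ D, φ (g • v) = ρ g (φ v)) (hφD : SurjOn φ D univ) :
    AbsolutelyIndiscernibleClasses G D fun v w => φ v = φ w where
  smul_mem := hD
  rel_smul g v hv w hw hvw := by rw [hφ g v hv, hφ g w hw, hvw]
  refl _ _ := rfl
  symm _ _ _ _ := Eq.symm
  trans _ _ _ _ _ _ := Eq.trans
  infinite := by
    choose r hrD hr using fun k => hφD (mem_univ k)
    exact ⟨r, hrD, fun k l hkl hrkl => hkl (by rwa [hr, hr] at hrkl)⟩
  exists_smul π _ hπ hπ_surj := by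
    obtain ⟨σ, hσ⟩ := exists_perm_apply_eq hφD hπ hπ_surj
    obtain ⟨g, rfl⟩ := hρ σ
    exact ⟨g, fun v hv => (hφ g v hv).trans (hσ v hv)⟩

theorem exists_apply_smul_eq_of_stabilizer [Group G] [MulAction G X] {ρ : G →* Perm β}
    {x₀ : X} {b : β} (hstab : ∀ g : G, g • x₀ = x₀ → ρ g b = b) :
    ∃ φ : X → β, ∀ g : G, φ (g • x₀) = ρ g b := by
  refine ⟨fun v => ρ (invFun (· • x₀) v) b, fun g => ?_⟩
  have hfix : (g⁻¹ * invFun (· • x₀) (g • x₀)) • x₀ = x₀ := by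
    rw [mul_smul, invFun_eq (f := (· • x₀)) ⟨g, rfl⟩, inv_smul_smul]
  simpa [Perm.mul_apply, ← Perm.eq_inv_iff_eq] using hstab _ hfix

theorem absolutelyIndiscernibleClasses_orbit [Group G] [MulAction G X] {ρ : G →* Perm ℕ}
    (hρ : Surjective ρ) {x₀ : X} {b : ℕ} (hstab : ∀ g : G, g • x₀ = x₀ → ρ g b = b) :
    ∃ E, AbsolutelyIndiscernibleClasses G (orbit G x₀) E := by
  obtain ⟨φ, hφ⟩ := exists_apply_smul_eq_of_stabilizer hstab
  refine ⟨_, absolutelyIndiscernibleClasses_of_equivariant (φ := φ) hρ (fun g v hv => ?_) ?_ ?_⟩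
  · obtain ⟨h, rfl⟩ := hv
    exact smul_smul g h x₀ ▸ mem_orbit x₀ (g * h)
  · rintro g _ ⟨h, rfl⟩
    rw [smul_smul, hφ, hφ, map_mul, Perm.mul_apply]
  · intro m _
    obtain ⟨g, hg⟩ := hρ (swap b m)
    exact ⟨g • x₀, mem_orbit x₀ g, by rw [hφ, hg, swap_apply_left]⟩

end

namespace AbsolutelyIndiscernibleClasses

variable {G X : Type*} [Group G] [MulAction G X] {D : Set X} {E : X → X → Prop}
  (h : AbsolutelyIndiscernibleClasses G D E)

def setoid : Setoid D where
  r a b := E a b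
  iseqv := ⟨fun a => h.refl a a.2, fun {a b} => h.symm a a.2 b b.2,
    fun {a b c} => h.trans a a.2 b b.2 c c.2⟩

abbrev Classes : Type _ := Quotient h.setoid

def cls (v : X) (hv : v ∈ D) : h.Classes := Quotient.mk h.setoid ⟨v, hv⟩

theorem cls_eq_cls_iff {v w : X} (hv : v ∈ D) (hw : w ∈ D) : h.cls v hv = h.cls w hw ↔ E v w :=
  Quotient.eq

theorem exists_cls_eq (q : h.Classes) : ∃ v, ∃ hv : v ∈ D, h.cls v hv = q :=
  Quotient.inductionOn q fun a => ⟨a, a.2, rfl⟩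

instance : MulAction G h.Classes where
  smul g := Quotient.map (fun a => ⟨g • a.1, h.smul_mem g a a.2⟩) fun a b =>
    h.rel_smul g a a.2 b b.2
  one_smul q := Quotient.inductionOn q fun a =>
    congrArg (Quotient.mk _) (Subtype.ext (one_smul G a.1))
  mul_smul g g' q := Quotient.inductionOn q fun a =>
    congrArg (Quotient.mk _) (Subtype.ext (mul_smul g g' a.1))

theorem smul_cls (g : G) {v : X} (hv : v ∈ D) :
    g • h.cls v hv = h.cls (g • v) (h.smul_mem g v hv) :=
  rfl

instance : Infinite h.Classes := by
  obtain ⟨r, hrD, hr⟩ := h.infinite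
  exact Infinite.of_injective (fun k => h.cls (r k) (hrD k)) fun k l hkl =>
    by_contra fun hne => hr k l hne ((h.cls_eq_cls_iff _ _).1 hkl)

theorem exists_smul_eq_perm (σ : Perm h.Classes) : ∃ g : G, ∀ q, g • q = σ q := by
  classical
  choose rep rep_mem cls_rep using h.exists_cls_eq
  set π : X → X := fun v => if hv : v ∈ D then rep (σ (h.cls v hv)) else v
  have hπD : ∀ v ∈ D, π v ∈ D := fun v hv => by simp only [π, dif_pos hv, rep_mem]
  have cls_π : ∀ v (hv : v ∈ D), h.cls (π v) (hπD v hv) = σ (h.cls v hv) := fun v hv => by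
    simp only [π, dif_pos hv, cls_rep]
  obtain ⟨g, hg⟩ := h.exists_smul π hπD
    (fun v hv w hw => by
      rw [← h.cls_eq_cls_iff hv hw, ← h.cls_eq_cls_iff (hπD v hv) (hπD w hw), cls_π, cls_π,
        σ.apply_eq_iff_eq])
    (fun w hw => ⟨rep (σ.symm (h.cls w hw)), rep_mem _, by
      rw [← h.cls_eq_cls_iff (hπD _ (rep_mem _)) hw, cls_π _ (rep_mem _), cls_rep,
        σ.apply_symm_apply]⟩)
  refine ⟨g, fun q => ?_⟩
  obtain ⟨v, hv, rfl⟩ := h.exists_cls_eq q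
  rw [smul_cls, ← cls_π v hv, h.cls_eq_cls_iff]
  exact hg v hv

end AbsolutelyIndiscernibleClasses

theorem AbsolutelyIndiscernibleClasses.exists_surjective_hom {G X : Type*} [Group G]
    [MulAction G X] [Countable X] {D : Set X} {E : X → X → Prop}
    (h : AbsolutelyIndiscernibleClasses G D E) :
    ∃ ρ : G →* Perm ℕ, Surjective ρ ∧ ∃ F : X → ℕ, ∀ m, ∃ x : X, ∀ g : G, ρ g m = F (g • x) := by
  classical
  obtain ⟨e⟩ : Nonempty (h.Classes ≃ ℕ) := nonempty_equiv_of_countable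
  have toPerm_surj : Surjective (toPermHom G h.Classes) := fun σ => by
    obtain ⟨g, hg⟩ := h.exists_smul_eq_perm σ
    exact ⟨g, Equiv.ext hg⟩
  refine ⟨(e.permCongrHom : Perm h.Classes →* Perm ℕ).comp (toPermHom G h.Classes),
    e.permCongrHom.surjective.comp toPerm_surj,
    fun v => if hv : v ∈ D then e (h.cls v hv) else 0, fun m => ?_⟩
  obtain ⟨v, hv, hvm⟩ := h.exists_cls_eq (e.symm m)
  refine ⟨v, fun g => ?_⟩
  change e (g • e.symm m) = _
  rw [← hvm, smul_cls]
  simp only [dif_pos (h.smul_mem g v hv)]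

section

variable {L : ℕ → ℕ} {A : Str L}

theorem isInducing_coe_aut : IsInducing fun g : aut A => ((g : Perm ℕ) : ℕ → ℕ) :=
  (IsInducing.mk rfl).comp IsInducing.subtypeVal

theorem continuous_smul_tuple {n : ℕ} (x : Fin n → ℕ) : Continuous fun g : aut A => g • x :=
  continuous_pi fun k => (continuous_apply (x k)).comp isInducing_coe_aut.continuous

theorem exists_tuple_stabilizer_subset_fiber {f : aut A → ℕ} (hf : Continuous f) :
    ∃ (N : ℕ) (x₀ : Fin N → ℕ), ∀ g : aut A, g • x₀ = x₀ → f g = f 1 := by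
  obtain ⟨V, hV, hVf⟩ := isInducing_coe_aut.isOpen_iff.1 ((isOpen_discrete {f 1}).preimage hf)
  have h1 : (1 : aut A) ∈ (fun g : aut A => ((g : Perm ℕ) : ℕ → ℕ)) ⁻¹' V := hVf ▸ rfl
  obtain ⟨I, u, hu, hIV⟩ := isOpen_pi_iff.1 hV id h1
  -- the basic neighbourhood `I.pi u` of `1` only constrains values at points below `N`
  refine ⟨I.sup id + 1, fun k => k, fun g hg => ?_⟩
  suffices ((g : Perm ℕ) : ℕ → ℕ) ∈ (I : Set ℕ).pi u by
    have hg : g ∈ (fun g : aut A => ((g : Perm ℕ) : ℕ → ℕ)) ⁻¹' V := hIV this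
    rwa [hVf] at hg
  intro i hi
  have hgi : (g : Perm ℕ) i = i := congrFun hg ⟨i, Nat.lt_succ_of_le (I.le_sup (f := id) hi)⟩
  show (g : Perm ℕ) i ∈ u i
  rw [hgi]
  exact (hu i hi).2

theorem continuous_of_forall_apply_eq_smul {H : aut A →* Perm ℕ} {n : ℕ}
    {F : (Fin n → ℕ) → ℕ} (hF : ∀ m, ∃ x : Fin n → ℕ, ∀ g, H g m = F (g • x)) :
    Continuous fun g => ((H g : Perm ℕ) : ℕ → ℕ) := by
  refine continuous_pi fun m => ?_
  obtain ⟨x, hx⟩ := hF m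
  exact (continuous_of_discreteTopology.comp (continuous_smul_tuple x)).congr fun g => (hx g).symm

theorem absolutelyIndiscernibleClasses_aut_iff {n : ℕ} {D : Set (Fin n → ℕ)}
    {E : (Fin n → ℕ) → (Fin n → ℕ) → Prop} :
    AbsolutelyIndiscernibleClasses (aut A) D E ↔
      (∀ g : Equiv.Perm ℕ, IsIso A A g → ∀ v ∈ D, (fun k => g (v k)) ∈ D) ∧
      (∀ g : Equiv.Perm ℕ, IsIso A A g → ∀ v ∈ D, ∀ w ∈ D,
        E v w → E (fun k => g (v k)) (fun k => g (w k))) ∧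
      (∀ v ∈ D, E v v) ∧
      (∀ v ∈ D, ∀ w ∈ D, E v w → E w v) ∧
      (∀ v ∈ D, ∀ w ∈ D, ∀ u ∈ D, E v w → E w u → E v u) ∧
      (∃ r : ℕ → (Fin n → ℕ), (∀ k, r k ∈ D) ∧ ∀ k l : ℕ, k ≠ l → ¬E (r k) (r l)) ∧
      (∀ π : (Fin n → ℕ) → (Fin n → ℕ),
        (∀ v ∈ D, π v ∈ D) →
        (∀ v ∈ D, ∀ w ∈ D, (E v w ↔ E (π v) (π w))) →
        (∀ w ∈ D, ∃ v ∈ D, E (π v) w) →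
        ∃ g : Equiv.Perm ℕ, IsIso A A g ∧ ∀ v ∈ D, E (fun k => g (v k)) (π v)) where
  mp h := ⟨fun g hg => h.smul_mem ⟨g, hg⟩, fun g hg => h.rel_smul ⟨g, hg⟩, h.refl, h.symm,
    h.trans, h.infinite, fun π hπD hπ hπ_surj =>
      let ⟨g, hg⟩ := h.exists_smul π hπD hπ hπ_surj
      ⟨g, g.2, hg⟩⟩
  mpr := fun ⟨hD, hE, hrefl, hsymm, htrans, hinf, hext⟩ =>
    ⟨fun g => hD g g.2, fun g => hE g g.2, hrefl, hsymm, htrans, hinf, fun π hπD hπ hπ_surj =>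
      let ⟨g, hg, hgπ⟩ := hext π hπD hπ hπ_surj
      ⟨⟨g, hg⟩, hgπ⟩⟩

end

/-- **Theorem 1.4.** Let `A` be a countable structure.  There is a continuous
homomorphism from `Aut(A)` onto `S_∞` if and only if there are `n`, an
`L_{ω₁ω}`-definable (equivalently, automorphism-invariant) set `D ⊆ A^n` and an
`L_{ω₁ω}`-definable (equivalently, automorphism-invariant) equivalence relation
`E ⊆ D²` with infinitely many classes whose classes are absolutely indiscernible:
every permutation of the `E`-classes extends to an automorphism of `A`. -/
theorem aut_onto_Sinfty_iff_absolute_indiscernibles (L : ℕ → ℕ) (A : Str L) :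
    (∃ H : ↥(aut A) →* Equiv.Perm ℕ,
      (Continuous fun g : ↥(aut A) => ((H g : Equiv.Perm ℕ) : ℕ → ℕ)) ∧
      Function.Surjective H) ↔
    (∃ (n : ℕ) (D : Set (Fin n → ℕ)) (E : (Fin n → ℕ) → (Fin n → ℕ) → Prop),
      -- `D` is invariant under all automorphisms of `A`
      (∀ g : Equiv.Perm ℕ, IsIso A A g → ∀ v ∈ D, (fun k => g (v k)) ∈ D) ∧
      -- `E` is invariant under all automorphisms of `A`
      (∀ g : Equiv.Perm ℕ, IsIso A A g → ∀ v ∈ D, ∀ w ∈ D,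
        E v w → E (fun k => g (v k)) (fun k => g (w k))) ∧
      -- `E` is an equivalence relation on `D`
      (∀ v ∈ D, E v v) ∧
      (∀ v ∈ D, ∀ w ∈ D, E v w → E w v) ∧
      (∀ v ∈ D, ∀ w ∈ D, ∀ u ∈ D, E v w → E w u → E v u) ∧
      -- `E` has infinitely many equivalence classes
      (∃ r : ℕ → (Fin n → ℕ), (∀ k, r k ∈ D) ∧ ∀ k l : ℕ, k ≠ l → ¬E (r k) (r l)) ∧
      -- the `E`-classes are absolutely indiscernible: every permutation `π` of the
      -- classes (presented by its action on representatives) extends to an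
      -- automorphism `g` of `A`, in the sense that `g(v̄)` lies in the class `π([v̄])`
      (∀ π : (Fin n → ℕ) → (Fin n → ℕ),
        (∀ v ∈ D, π v ∈ D) →
        (∀ v ∈ D, ∀ w ∈ D, (E v w ↔ E (π v) (π w))) →
        (∀ w ∈ D, ∃ v ∈ D, E (π v) w) →
        ∃ g : Equiv.Perm ℕ, IsIso A A g ∧ ∀ v ∈ D, E (fun k => g (v k)) (π v))) := by
  constructor
  · rintro ⟨H, hc, hs⟩
    obtain ⟨N, x₀, hx₀⟩ := exists_tuple_stabilizer_subset_fiber ((continuous_apply 0).comp hc)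
    obtain ⟨E, hE⟩ := absolutelyIndiscernibleClasses_orbit hs (b := 0) fun g hg => by
      simpa using hx₀ g hg
    exact ⟨N, _, E, absolutelyIndiscernibleClasses_aut_iff.1 hE⟩
  · rintro ⟨n, D, E, h⟩
    obtain ⟨H, hs, F, hF⟩ := (absolutelyIndiscernibleClasses_aut_iff.2 h).exists_surjective_hom
    exact ⟨H, continuous_of_forall_apply_eq_smul hF, hs⟩

end Paper
end

section
/- Let B and A be countable structures. For every infinitary bi-interpretation (I, J) of A and B (I an interpretation of A in B and J an interpretation of B in A, with the composite coded isomorphisms definable), the induced functors F_I : Iso(B) → Iso(A) and F_J : Iso(A) → Iso(B) form a Borel adjoint equivalence of the categories Iso(B) and Iso(A). -/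
namespace Paper

/-- An infinitary bi-interpretation of `A` and `B` (Definition 1.6 of the paper):
interpretations of each structure in the other such that the composite maps
`f^A_B ∘ f̃^B_A : Dom_B^{(Dom_A^B)} → B` and `f^B_A ∘ f̃^A_B : Dom_A^{(Dom_B^A)} → A`
are `L_{ω₁ω}`-definable in `B` and in `A` respectively; definability is rendered as
invariance of the graph under all automorphisms. -/
structure BiInterp {LA LB : ℕ → ℕ} (A : Str LA) (B : Str LB) where
  I : Interp A B
  J : Interp B A
  comp_def_B : ∀ g ∈ aut B, ∀ LL : List (List ℕ), (∀ l ∈ LL, l ∈ I.Dom) →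
    List.map I.F LL ∈ J.Dom →
    J.F (List.map I.F (List.map (List.map (⇑g)) LL)) = g (J.F (List.map I.F LL))
  comp_def_A : ∀ g ∈ aut A, ∀ LL : List (List ℕ), (∀ l ∈ LL, l ∈ J.Dom) →
    List.map J.F LL ∈ I.Dom →
    I.F (List.map J.F (List.map (List.map (⇑g)) LL)) = g (I.F (List.map J.F LL))

end Paper
namespace Paper

def Isomorphic {L : ℕ → ℕ} (M N : Str L) : Prop := ∃ g : ℕ ≃ ℕ, IsIso M N g

/-- The copies of `B`: structures with domain `ω` isomorphic to `B`.  These are the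
objects of the category `Iso(B)`; the morphisms are the isomorphisms between copies. -/
abbrev Copy {L : ℕ → ℕ} (B : Str L) := {M : Str L // Isomorphic M B}

def selfCopy {L : ℕ → ℕ} (B : Str L) : Copy B := ⟨B, ⟨Equiv.refl ℕ, isIso_refl B⟩⟩

/-- A functor from `Iso(B)` to `Iso(A)`: it maps copies of `B` to copies of `A` and
isomorphisms between copies of `B` to isomorphisms between the corresponding copies
of `A`, preserving identity and composition (Definition 1.8). -/
structure IsoFunctor {LB LA : ℕ → ℕ} (B : Str LB) (A : Str LA) where
  obj : Copy B → Copy A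
  map : ∀ (M N : Copy B) (g : ℕ ≃ ℕ), IsIso M.1 N.1 g → (ℕ ≃ ℕ)
  map_iso : ∀ M N g hg, IsIso (obj M).1 (obj N).1 (map M N g hg)
  map_id : ∀ (M : Copy B) (h : IsIso M.1 M.1 (Equiv.refl ℕ)),
    map M M (Equiv.refl ℕ) h = Equiv.refl ℕ
  map_comp : ∀ (M N P : Copy B) (g₁ : ℕ ≃ ℕ) (h₁ : IsIso M.1 N.1 g₁)
    (g₂ : ℕ ≃ ℕ) (h₂ : IsIso N.1 P.1 g₂) (h₃ : IsIso M.1 P.1 (g₁.trans g₂)),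
    map M P (g₁.trans g₂) h₃ = (map M N g₁ h₁).trans (map N P g₂ h₂)

/-- Codes of structures with domain `ω` as elements of Cantor space. -/
abbrev ObjCode (L : ℕ → ℕ) := (Σ i : ℕ, (Fin (L i) → ℕ)) → Bool

def codeStr {L : ℕ → ℕ} (M : Str L) : ObjCode L := fun p => M.rel p.1 p.2

/-- A functor is Borel if its action on objects and its action on morphisms are
given by Borel operators on the codes. -/
def IsBorelFunctor {LB LA : ℕ → ℕ} {B : Str LB} {A : Str LA} (F : IsoFunctor B A) : Prop :=
  ∃ (Φ : ObjCode LB → ObjCode LA) (Ψ : ObjCode LB × (ℕ → ℕ) × ObjCode LB → (ℕ → ℕ)),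
    Measurable Φ ∧ Measurable Ψ ∧
    (∀ M : Copy B, codeStr (F.obj M).1 = Φ (codeStr M.1)) ∧
    (∀ M N g hg, ⇑(F.map M N g hg) = Ψ (codeStr M.1, ⇑g, codeStr N.1))

/-- Natural isomorphism of functors `Iso(B) → Iso(A)` (Definition 1.9). -/
def NatIso {LB LA : ℕ → ℕ} {B : Str LB} {A : Str LA} (F G : IsoFunctor B A) : Prop :=
  ∃ η : Copy B → (ℕ ≃ ℕ),
    (∀ M, IsIso (F.obj M).1 (G.obj M).1 (η M)) ∧
    (∀ (M N : Copy B) (g : ℕ ≃ ℕ) (hg : IsIso M.1 N.1 g),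
      (η M).trans (G.map M N g hg) = (F.map M N g hg).trans (η N))

end Paper
namespace Paper

/-- An adjoint equivalence between the categories `Iso(B)` and `Iso(A)`
(Definition 1.11): functors in both directions together with natural isomorphisms
`η : id → G∘F` and `ε : id → F∘G` satisfying the triangle identities
`F(η_M) = ε_{F(M)}` and `G(ε_N) = η_{G(N)}`. -/
structure AdjEquiv {LB LA : ℕ → ℕ} (B : Str LB) (A : Str LA) where
  F : IsoFunctor B A
  G : IsoFunctor A B
  η : Copy B → (ℕ ≃ ℕ)
  ε : Copy A → (ℕ ≃ ℕ)
  η_iso : ∀ M : Copy B, IsIso M.1 (G.obj (F.obj M)).1 (η M)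
  ε_iso : ∀ N : Copy A, IsIso N.1 (F.obj (G.obj N)).1 (ε N)
  η_nat : ∀ (M M' : Copy B) (g : ℕ ≃ ℕ) (hg : IsIso M.1 M'.1 g),
    (η M).trans (G.map (F.obj M) (F.obj M') (F.map M M' g hg) (F.map_iso M M' g hg)) =
      g.trans (η M')
  ε_nat : ∀ (N N' : Copy A) (g : ℕ ≃ ℕ) (hg : IsIso N.1 N'.1 g),
    (ε N).trans (F.map (G.obj N) (G.obj N') (G.map N N' g hg) (G.map_iso N N' g hg)) =
      g.trans (ε N')
  triangleF : ∀ M : Copy B, F.map M (G.obj (F.obj M)) (η M) (η_iso M) = ε (F.obj M)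
  triangleG : ∀ N : Copy A, G.map N (F.obj (G.obj N)) (ε N) (ε_iso N) = η (G.obj N)

/-- An adjoint equivalence is Borel if `F`, `G`, `η` and `ε` are given by Borel
operators on the codes. -/
def IsBorelAdjEquiv {LB LA : ℕ → ℕ} {B : Str LB} {A : Str LA} (E : AdjEquiv B A) : Prop :=
  IsBorelFunctor E.F ∧ IsBorelFunctor E.G ∧
    (∃ u : ObjCode LB → (ℕ → ℕ), Measurable u ∧ ∀ M : Copy B, u (codeStr M.1) = ⇑(E.η M)) ∧
    (∃ v : ObjCode LA → (ℕ → ℕ), Measurable v ∧ ∀ N : Copy A, v (codeStr N.1) = ⇑(E.ε N))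

end Paper
namespace Paper

/-- The domain of the interpretation `I`, transferred to a copy `M` of `B`
(the set defined in `M` by the same `L_{ω₁ω}` definition that defines `I.Dom` in `B`). -/
def DomIn {LA LB : ℕ → ℕ} {A : Str LA} {B : Str LB} (I : Interp A B) (M : Copy B) :
    Set (List ℕ) :=
  {l | ∀ g : ℕ ≃ ℕ, IsIso M.1 B g → List.map (⇑g) l ∈ I.Dom}

/-- The equivalence relation of `I`, transferred to a copy `M` of `B`. -/
def EqvIn {LA LB : ℕ → ℕ} {A : Str LA} {B : Str LB} (I : Interp A B) (M : Copy B)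
    (l₁ l₂ : List ℕ) : Prop :=
  ∀ g : ℕ ≃ ℕ, IsIso M.1 B g → I.eqv (List.map (⇑g) l₁) (List.map (⇑g) l₂)

/-- The relations of `I`, transferred to a copy `M` of `B`. -/
def RIn {LA LB : ℕ → ℕ} {A : Str LA} {B : Str LB} (I : Interp A B) (M : Copy B)
    (k : ℕ) (v : Fin (LA k) → List ℕ) : Prop :=
  ∀ g : ℕ ≃ ℕ, IsIso M.1 B g → I.R k fun t => List.map (⇑g) (v t)

/-- `FI` is (a presentation of) the functor `F_I : Iso(B) → Iso(A)` induced by the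
interpretation `I`, via the bijections `τ^M : ω → Dom^M/∼`: for each copy `M` of `B`,
`τ M` enumerates the `∼`-classes of the transferred domain without repetition, the
structure `FI.obj M` is the pullback of the interpreted structure along `τ M`, and
`FI.map` is given by `h ↦ (τ^N)⁻¹ ∘ h̃ ∘ τ^M`. -/
def InducedBy {LA LB : ℕ → ℕ} {A : Str LA} {B : Str LB} (I : Interp A B)
    (FI : IsoFunctor B A) (τ : Copy B → ℕ → List ℕ) : Prop :=
  ∀ M : Copy B,
    (∀ a : ℕ, τ M a ∈ DomIn I M) ∧
    (∀ l ∈ DomIn I M, ∃ a : ℕ, EqvIn I M (τ M a) l) ∧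
    (∀ a b : ℕ, EqvIn I M (τ M a) (τ M b) → a = b) ∧
    (∀ (k : ℕ) (v : Fin (LA k) → ℕ),
      (FI.obj M).1.rel k v = true ↔ RIn I M k fun t => τ M (v t)) ∧
    (∀ (N : Copy B) (g : ℕ ≃ ℕ) (hg : IsIso M.1 N.1 g) (a : ℕ),
      EqvIn I N (τ N (FI.map M N g hg a)) (List.map (⇑g) (τ M a)))

end Paper
namespace Paper

theorem IsIso.trans {L : ℕ → ℕ} {M N P : Str L} {g h : ℕ ≃ ℕ} (hg : IsIso M N g)
    (hh : IsIso N P h) : IsIso M P (g.trans h) :=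
  fun i v => (hg i v).trans (hh i _)

theorem IsIso.symm {L : ℕ → ℕ} {M N : Str L} {g : ℕ ≃ ℕ} (hg : IsIso M N g) :
    IsIso N M g.symm := fun i v => by
  simpa using (hg i fun k => g.symm (v k)).symm

instance {α : Type*} : MeasurableSpace (List α) := ⊤

open Classical in
noncomputable def leastWitness (P : ℕ → Prop) : ℕ :=
  Nat.find (p := fun n => P n ∨ ∀ m, ¬ P m)
    ((Classical.em (∃ n, P n)).elim (fun ⟨n, hn⟩ => ⟨n, .inl hn⟩)
      fun h => ⟨0, .inr (not_exists.mp h)⟩)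

theorem leastWitness_spec {P : ℕ → Prop} (h : ∃ n, P n) : P (leastWitness P) := by
  classical
  exact (Nat.find_spec (p := fun n => P n ∨ ∀ m, ¬ P m) _).resolve_right (not_forall_not.mpr h)

theorem measurable_leastWitness {X : Type*} [MeasurableSpace X] {P : X → ℕ → Prop}
    (hP : ∀ n, MeasurableSet {x | P x n}) : Measurable fun x => leastWitness (P x) := by
  classical
  refine measurable_find _ fun n => (hP n).union ?_
  show MeasurableSet {x | ∀ m, ¬ P x m}
  rw [Set.ofPred_forall]
  exact .iInter fun m => (hP m).compl

theorem measurable_leastWitness_eq {X : Type*} [MeasurableSpace X] {u : X → ℕ → ℕ}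
    (hu : Measurable u) : Measurable fun x n => leastWitness fun m => u x m = n :=
  measurable_pi_lambda _ fun n => measurable_leastWitness fun m =>
    (measurable_pi_apply m).comp hu (measurableSet_singleton n)

theorem leastWitness_eq_symm (e : ℕ ≃ ℕ) (n : ℕ) : (leastWitness fun m => e m = n) = e.symm n :=
  e.injective <| by
    rw [e.apply_symm_apply]
    exact leastWitness_spec (P := fun m => e m = n) ⟨e.symm n, e.apply_symm_apply n⟩

theorem Measurable.apply_nat {X : Type*} [MeasurableSpace X] {f : X → ℕ → ℕ} {k : X → ℕ}
    (hf : Measurable f) (hk : Measurable k) : Measurable fun x => f x (k x) :=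
  (measurable_from_prod_countable_left (f := fun q : X × ℕ => f q.1 q.2)
    fun n => (measurable_pi_apply n).comp hf).comp (measurable_id.prodMk hk)

theorem measurable_list_map (l : List ℕ) : Measurable fun f : ℕ → ℕ => l.map f := by
  induction l with
  | nil => exact measurable_const
  | cons a l ih =>
    exact (Measurable.of_discrete (f := fun q : ℕ × List ℕ => q.1 :: q.2)).comp
      ((measurable_pi_apply a).prodMk ih)

section BackAndForth

variable {L : ℕ → ℕ}

/-- `p` lists the graph of a finite partial map from the structure coded by `x` to `B`. -/
def IsPartialIso (B : Str L) (x : ObjCode L) (p : List (ℕ × ℕ)) : Prop :=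
  (∀ u ∈ p, ∀ w ∈ p, u.1 = w.1 ↔ u.2 = w.2) ∧
    ∀ i (v : Fin (L i) → ℕ × ℕ), (∀ k, v k ∈ p) →
      x ⟨i, fun k => (v k).1⟩ = B.rel i fun k => (v k).2

structure IsBackForth (B : Str L) (x : ObjCode L) (R : List (ℕ × ℕ) → Prop) : Prop where
  nil : R []
  isPartialIso : ∀ p, R p → IsPartialIso B x p
  forth : ∀ p, R p → ∀ a, ∃ b, R (p ++ [(a, b)])
  back : ∀ p, R p → ∀ b, ∃ a, R (p ++ [(a, b)])

noncomputable def forthStep (R : List (ℕ × ℕ) → Prop) (p : List (ℕ × ℕ)) (a : ℕ) :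
    List (ℕ × ℕ) :=
  p ++ [(a, leastWitness fun b => R (p ++ [(a, b)]))]

noncomputable def backStep (R : List (ℕ × ℕ) → Prop) (p : List (ℕ × ℕ)) (b : ℕ) :
    List (ℕ × ℕ) :=
  p ++ [(leastWitness fun a => R (p ++ [(a, b)]), b)]

noncomputable def backForthSeq (R : List (ℕ × ℕ) → Prop) : ℕ → List (ℕ × ℕ)
  | 0 => []
  | n + 1 => backStep R (forthStep R (backForthSeq R n) n) n

noncomputable def backForthMap (R : List (ℕ × ℕ) → Prop) (a : ℕ) : ℕ :=
  leastWitness fun b => (a, b) ∈ backForthSeq R (a + 1)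

theorem backForthSeq_prefix (R : List (ℕ × ℕ) → Prop) {n m : ℕ} (h : n ≤ m) :
    backForthSeq R n <+: backForthSeq R m := by
  induction m, h using Nat.le_induction with
  | base => exact List.prefix_refl _
  | succ m _ ih =>
    exact ih.trans ((List.prefix_append _ _).trans (List.prefix_append _ _))

theorem mem_backForthSeq_forth (R : List (ℕ × ℕ) → Prop) (a : ℕ) :
    ∃ b, (a, b) ∈ backForthSeq R (a + 1) :=
  ⟨_, List.mem_append_left _ (List.mem_append_right _ (List.mem_singleton_self _))⟩

theorem mem_backForthSeq_back (R : List (ℕ × ℕ) → Prop) (b : ℕ) :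
    ∃ a, (a, b) ∈ backForthSeq R (b + 1) :=
  ⟨_, List.mem_append_right _ (List.mem_singleton_self _)⟩

theorem map_mem_backForthSeq (R : List (ℕ × ℕ) → Prop) (a : ℕ) :
    (a, backForthMap R a) ∈ backForthSeq R (a + 1) :=
  leastWitness_spec (mem_backForthSeq_forth R a)

namespace IsBackForth

variable {B : Str L} {x : ObjCode L} {R : List (ℕ × ℕ) → Prop}

theorem backForthSeq_mem (hR : IsBackForth B x R) (n : ℕ) : R (backForthSeq R n) := by
  induction n with
  | zero => exact hR.nil
  | succ n ih =>
    have hforth := leastWitness_spec (hR.forth _ ih n)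
    exact leastWitness_spec (hR.back _ hforth n)

theorem isPartialIso_backForthSeq (hR : IsBackForth B x R) (n : ℕ) :
    IsPartialIso B x (backForthSeq R n) :=
  hR.isPartialIso _ (hR.backForthSeq_mem n)

theorem fst_eq_iff_snd_eq (hR : IsBackForth B x R) {n m : ℕ} {u w : ℕ × ℕ}
    (hu : u ∈ backForthSeq R n) (hw : w ∈ backForthSeq R m) : u.1 = w.1 ↔ u.2 = w.2 :=
  (hR.isPartialIso_backForthSeq (max n m)).1 u
    ((backForthSeq_prefix R (le_max_left n m)).subset hu) w
    ((backForthSeq_prefix R (le_max_right n m)).subset hw)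

theorem eq_backForthMap (hR : IsBackForth B x R) {n a b : ℕ}
    (h : (a, b) ∈ backForthSeq R n) : b = backForthMap R a :=
  (hR.fst_eq_iff_snd_eq h (map_mem_backForthSeq R a)).mp rfl

theorem backForthMap_bijective (hR : IsBackForth B x R) : (backForthMap R).Bijective := by
  refine ⟨fun a a' h => ?_, fun b => ?_⟩
  · exact (hR.fst_eq_iff_snd_eq (map_mem_backForthSeq R a) (map_mem_backForthSeq R a')).mpr h
  · obtain ⟨a, ha⟩ := mem_backForthSeq_back R b
    exact ⟨a, (hR.eq_backForthMap ha).symm⟩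

theorem isIso_backForthMap {M : Str L} (hR : IsBackForth B (codeStr M) R) :
    IsIso M B (Equiv.ofBijective _ hR.backForthMap_bijective) := by
  intro i v
  obtain ⟨n, hn⟩ : ∃ n, ∀ k, v k + 1 ≤ n :=
    ⟨Finset.univ.sup fun k => v k + 1,
      fun k => Finset.le_sup (f := fun k => v k + 1) (Finset.mem_univ k)⟩
  exact (hR.isPartialIso_backForthSeq n).2 i (fun k => (v k, backForthMap R (v k)))
    fun k => (backForthSeq_prefix R (hn k)).subset (map_mem_backForthSeq R (v k))

end IsBackForth

section Measurable

variable {X : Type*} [MeasurableSpace X] {R : X → List (ℕ × ℕ) → Prop}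

theorem measurable_forthStep (hR : ∀ p, MeasurableSet {x | R x p}) (a : ℕ) :
    Measurable fun xp : X × List (ℕ × ℕ) => forthStep (R xp.1) xp.2 a :=
  measurable_from_prod_countable_left fun p =>
    (Measurable.of_discrete (f := fun b => p ++ [(a, b)])).comp
      (measurable_leastWitness fun b => hR (p ++ [(a, b)]))

theorem measurable_backStep (hR : ∀ p, MeasurableSet {x | R x p}) (b : ℕ) :
    Measurable fun xp : X × List (ℕ × ℕ) => backStep (R xp.1) xp.2 b :=
  measurable_from_prod_countable_left fun p =>
    (Measurable.of_discrete (f := fun a => p ++ [(a, b)])).comp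
      (measurable_leastWitness fun a => hR (p ++ [(a, b)]))

theorem measurable_backForthSeq (hR : ∀ p, MeasurableSet {x | R x p}) (n : ℕ) :
    Measurable fun x => backForthSeq (R x) n := by
  induction n with
  | zero => exact measurable_const
  | succ n ih =>
    exact (measurable_backStep hR n).comp
      (measurable_id.prodMk ((measurable_forthStep hR n).comp (measurable_id.prodMk ih)))

theorem measurable_backForthMap (hR : ∀ p, MeasurableSet {x | R x p}) :
    Measurable fun x => backForthMap (R x) :=
  measurable_pi_lambda _ fun a => measurable_leastWitness fun b =>
    measurable_backForthSeq hR (a + 1) (MeasurableSet.of_discrete (s := {p | (a, b) ∈ p}))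

end Measurable

section BackForthRel

open Cardinal

noncomputable def BackForthRel (B : Str L) : Ordinal.{0} → ObjCode L → List (ℕ × ℕ) → Prop :=
  Ordinal.lt_wf.fix fun α rel x p => IsPartialIso B x p ∧ ∀ β (h : β < α),
    rel β h x p ∧ (∀ a, ∃ b, rel β h x (p ++ [(a, b)])) ∧ ∀ b, ∃ a, rel β h x (p ++ [(a, b)])

theorem backForthRel_iff (B : Str L) (α : Ordinal) (x : ObjCode L) (p : List (ℕ × ℕ)) :
    BackForthRel B α x p ↔ IsPartialIso B x p ∧ ∀ β < α, BackForthRel B β x p ∧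
      (∀ a, ∃ b, BackForthRel B β x (p ++ [(a, b)])) ∧
        ∀ b, ∃ a, BackForthRel B β x (p ++ [(a, b)]) := by
  unfold BackForthRel
  rw [Ordinal.lt_wf.fix_eq]

namespace BackForthRel

variable {B : Str L} {α β : Ordinal} {x : ObjCode L} {p : List (ℕ × ℕ)}

theorem isPartialIso (h : BackForthRel B α x p) : IsPartialIso B x p :=
  ((backForthRel_iff B α x p).mp h).1

theorem mono (h : BackForthRel B α x p) (hβ : β ≤ α) : BackForthRel B β x p := by
  rcases hβ.eq_or_lt with rfl | hlt
  · exact h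
  · exact (((backForthRel_iff B α x p).mp h).2 β hlt).1

theorem forth_back_of_succ (h : BackForthRel B (α + 1) x p) :
    (∀ a, ∃ b, BackForthRel B α x (p ++ [(a, b)])) ∧
      ∀ b, ∃ a, BackForthRel B α x (p ++ [(a, b)]) :=
  (((backForthRel_iff B _ x p).mp h).2 α (lt_add_one α)).2

end BackForthRel

theorem backForthRel_of_isIso {M B : Str L} {e : ℕ ≃ ℕ} (he : IsIso M B e) (α : Ordinal) :
    ∀ p : List (ℕ × ℕ), (∀ u ∈ p, e u.1 = u.2) → BackForthRel B α (codeStr M) p := by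
  induction α using WellFoundedLT.induction with
  | _ α ih =>
    intro p hp
    have extend : ∀ a b, e a = b → ∀ u ∈ p ++ [(a, b)], e u.1 = u.2 := by
      intro a b hab u hu
      rcases List.mem_append.mp hu with hu | hu
      · exact hp u hu
      · rw [List.mem_singleton.mp hu]; exact hab
    refine (backForthRel_iff B α _ p).mpr ⟨⟨fun u hu w hw => ?_, fun i v hv => ?_⟩,
      fun β hβ => ⟨ih β hβ p hp, fun a => ⟨e a, ih β hβ _ (extend a _ rfl)⟩,
        fun b => ⟨e.symm b, ih β hβ _ (extend _ b (e.apply_symm_apply b))⟩⟩⟩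
    · rw [← hp u hu, ← hp w hw, e.apply_eq_iff_eq]
    · exact (he i _).trans (congrArg (B.rel i) (funext fun k => hp _ (hv k)))

theorem isPartialIso_map_iff {M N B : Str L} {e : ℕ ≃ ℕ} (he : IsIso M N e)
    (p : List (ℕ × ℕ)) :
    IsPartialIso B (codeStr N) (p.map (Prod.map e id)) ↔ IsPartialIso B (codeStr M) p := by
  refine and_congr (by simp only [List.forall_mem_map, Prod.map_fst, Prod.map_snd, id,
    e.apply_eq_iff_eq]) ⟨fun h i v hv => ?_, fun h i v hv => ?_⟩
  · have := h i (fun k => Prod.map e id (v k)) fun k => List.mem_map_of_mem (hv k)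
    exact (he i _).trans this
  · choose w hw hwv using fun k => List.mem_map.mp (hv k)
    have := h i w hw
    rw [show v = fun k => Prod.map e id (w k) from funext fun k => (hwv k).symm]
    exact (he i _).symm.trans this

theorem backForthRel_map_iff {M N B : Str L} {e : ℕ ≃ ℕ} (he : IsIso M N e) (α : Ordinal) :
    ∀ p : List (ℕ × ℕ), BackForthRel B α (codeStr N) (p.map (Prod.map e id)) ↔
      BackForthRel B α (codeStr M) p := by
  induction α using WellFoundedLT.induction with
  | _ α ih =>
    intro p
    have step : ∀ β < α, ∀ a b,
        BackForthRel B β (codeStr N) (p.map (Prod.map e id) ++ [(e a, b)]) ↔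
          BackForthRel B β (codeStr M) (p ++ [(a, b)]) := fun β hβ a b => by
      simpa using ih β hβ (p ++ [(a, b)])
    rw [backForthRel_iff, backForthRel_iff]
    refine and_congr (isPartialIso_map_iff he p) (forall₂_congr fun β hβ =>
      and_congr (ih β hβ p) (and_congr ?_ (forall_congr' fun b => ?_)))
    · exact (e.forall_congr fun a => exists_congr fun b => (step β hβ a b).symm).symm
    · exact (e.exists_congr fun a => (step β hβ a b).symm).symm

theorem not_countable_card_le_aleph0 : ¬ Countable {o : Ordinal.{0} // o.card ≤ ℵ₀} := by
  have hset : {o : Ordinal.{0} | o.card ≤ ℵ₀} = Set.Iio (ℵ₁).ord := by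
    ext o
    rw [Set.mem_Iio, lt_ord, ← succ_aleph0, Order.lt_succ_iff, Set.mem_ofPred_eq]
  rw [← mk_le_aleph0_iff]
  change ¬ #{o : Ordinal.{0} | o.card ≤ ℵ₀} ≤ _
  rw [hset, mk_Iio_ordinal, card_ord, ← lift_aleph0.{1, 0}, lift_le, not_le]
  exact aleph0_lt_aleph_one

/-- Otherwise a partial map in `≤_α \ ≤_{α+1}` for each countable `α` would inject the
uncountably many countable ordinals into the countable set of finite partial maps. -/
theorem exists_backForthRel_stable (B : Str L) : ∃ α : Ordinal.{0}, α.card ≤ ℵ₀ ∧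
    ∀ p, BackForthRel B α (codeStr B) p → BackForthRel B (α + 1) (codeStr B) p := by
  by_contra! hunstable
  choose f hf hnf using fun α : {o : Ordinal.{0} // o.card ≤ ℵ₀} => hunstable α.1 α.2
  have lt_ne : ∀ α β : {o : Ordinal.{0} // o.card ≤ ℵ₀}, α.1 < β.1 → f α ≠ f β :=
    fun α β hαβ heq => hnf α (heq ▸ (hf β).mono (Order.add_one_le_of_lt hαβ))
  refine not_countable_card_le_aleph0 (Function.Injective.countable (f := f) ?_)
  intro α β heq
  by_contra hne
  rcases lt_or_gt_of_ne (Subtype.coe_ne_coe.mpr hne) with h | h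
  · exact lt_ne α β h heq
  · exact lt_ne β α h heq.symm

noncomputable def backForthRank (B : Str L) : Ordinal.{0} :=
  (exists_backForthRel_stable B).choose

theorem card_backForthRank_le (B : Str L) : (backForthRank B).card ≤ ℵ₀ :=
  (exists_backForthRel_stable B).choose_spec.1

theorem measurableSet_isPartialIso (B : Str L) (p : List (ℕ × ℕ)) :
    MeasurableSet {x : ObjCode L | IsPartialIso B x p} := by
  unfold IsPartialIso
  rw [Set.ofPred_and]
  refine (MeasurableSet.const _).inter ?_
  rw [Set.ofPred_forall]
  refine .iInter fun i => ?_
  rw [Set.ofPred_forall]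
  exact .iInter fun v => (MeasurableSet.const _).imp
    (measurable_pi_apply _ (measurableSet_singleton _))

theorem measurableSet_backForthRel (B : Str L) {α : Ordinal.{0}} (hα : α.card ≤ ℵ₀)
    (p : List (ℕ × ℕ)) : MeasurableSet {x : ObjCode L | BackForthRel B α x p} := by
  induction α using WellFoundedLT.induction generalizing p with
  | _ α ih =>
    have : Countable (Set.Iio α) := by
      rw [← mk_le_aleph0_iff, mk_Iio_ordinal, ← lift_aleph0.{1, 0}, lift_le]
      exact hα
    have hβ : ∀ β : Set.Iio α, β.1.card ≤ ℵ₀ := fun β => (Ordinal.card_le_card β.2.le).trans hα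
    have hset : {x : ObjCode L | BackForthRel B α x p} = {x | IsPartialIso B x p} ∩
        ⋂ β : Set.Iio α, ({x | BackForthRel B β x p} ∩
          (⋂ a, ⋃ b, {x | BackForthRel B β x (p ++ [(a, b)])}) ∩
          ⋂ b, ⋃ a, {x | BackForthRel B β x (p ++ [(a, b)])}) := by
      ext x
      simp only [Set.mem_ofPred_eq, backForthRel_iff B α x p, Set.mem_inter_iff, Set.mem_iInter,
        Set.mem_iUnion, Subtype.forall, Set.mem_Iio, and_assoc]
    rw [hset]
    refine (measurableSet_isPartialIso B p).inter (.iInter fun β => ?_)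
    have ihβ := fun q => ih β.1 β.2 (hβ β) q
    exact ((ihβ p).inter (.iInter fun a => .iUnion fun b => ihβ _)).inter
      (.iInter fun b => .iUnion fun a => ihβ _)

end BackForthRel

theorem isBackForth_backForthRank {M B : Str L} (h : Isomorphic M B) :
    IsBackForth B (codeStr M) (BackForthRel B (backForthRank B) (codeStr M)) := by
  obtain ⟨e, he⟩ := h
  have stable := (exists_backForthRel_stable B).choose_spec.2
  have succ_of : ∀ p, BackForthRel B (backForthRank B) (codeStr M) p →
      BackForthRel B (backForthRank B + 1) (codeStr M) p := fun p hp =>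
    (backForthRel_map_iff he _ p).mp (stable _ ((backForthRel_map_iff he _ p).mpr hp))
  exact ⟨backForthRel_of_isIso he _ [] (by simp), fun p hp => hp.isPartialIso,
    fun p hp => (succ_of p hp).forth_back_of_succ.1,
    fun p hp => (succ_of p hp).forth_back_of_succ.2⟩

theorem exists_measurable_isIso_selector (B : Str L) : ∃ u : ObjCode L → ℕ → ℕ, Measurable u ∧
    ∀ M : Str L, Isomorphic M B → ∃ e : ℕ ≃ ℕ, IsIso M B e ∧ ⇑e = u (codeStr M) :=
  ⟨fun x => backForthMap (BackForthRel B (backForthRank B) x),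
    measurable_backForthMap (measurableSet_backForthRel B (card_backForthRank_le B)),
    fun _ h => ⟨_, (isBackForth_backForthRank h).isIso_backForthMap, rfl⟩⟩

end BackAndForth

section ToBase

variable {L : ℕ → ℕ} {B : Str L}

noncomputable def Copy.isoSelector (M : Copy B) : ℕ ≃ ℕ :=
  ((exists_measurable_isIso_selector B).choose_spec.2 M.1 M.2).choose

theorem Copy.isIso_isoSelector (M : Copy B) : IsIso M.1 B M.isoSelector :=
  ((exists_measurable_isIso_selector B).choose_spec.2 M.1 M.2).choose_spec.1

noncomputable def Copy.toBase (M : Copy B) : ℕ ≃ ℕ :=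
  M.isoSelector.trans (selfCopy B).isoSelector.symm

theorem Copy.isIso_toBase (M : Copy B) : IsIso M.1 B M.toBase :=
  M.isIso_isoSelector.trans (selfCopy B).isIso_isoSelector.symm

theorem toBase_selfCopy : (selfCopy B).toBase = Equiv.refl ℕ :=
  Equiv.self_trans_symm _

theorem Copy.toBase_symm_trans_mem_aut (M : Copy B) {g : ℕ ≃ ℕ} (hg : IsIso M.1 B g) :
    M.toBase.symm.trans g ∈ aut B :=
  M.isIso_toBase.symm.trans hg

theorem Copy.map_eq_map_toBase (M : Copy B) (g : ℕ ≃ ℕ) (l : List ℕ) :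
    l.map g = (l.map M.toBase).map (M.toBase.symm.trans g) := by
  simp [List.map_map, Function.comp_def]

noncomputable def Copy.conj (M N : Copy B) (g : ℕ ≃ ℕ) : Equiv.Perm ℕ :=
  (M.toBase.symm.trans g).trans N.toBase

theorem Copy.conj_mem_aut {M N : Copy B} {g : ℕ ≃ ℕ} (hg : IsIso M.1 N.1 g) :
    M.conj N g ∈ aut B :=
  (M.isIso_toBase.symm.trans hg).trans N.isIso_toBase

theorem Copy.conj_refl (M : Copy B) : M.conj M (Equiv.refl ℕ) = 1 := by
  ext n; simp [Copy.conj]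

theorem Copy.conj_trans (M N P : Copy B) (g₁ g₂ : ℕ ≃ ℕ) :
    M.conj P (g₁.trans g₂) = N.conj P g₂ * M.conj N g₁ := by
  ext n; simp [Copy.conj]

theorem Copy.conj_toBase (M : Copy B) : M.conj (selfCopy B) M.toBase = 1 := by
  ext n; simp [Copy.conj, toBase_selfCopy]

theorem selfCopy_conj (g : ℕ ≃ ℕ) : (selfCopy B).conj (selfCopy B) g = g := by
  ext n; simp [Copy.conj, toBase_selfCopy]

end ToBase

section BorelToBase

variable {L : ℕ → ℕ} (B : Str L)

theorem exists_measurable_toBase :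
    ∃ u : ObjCode L → ℕ → ℕ, Measurable u ∧ ∀ M : Copy B, u (codeStr M.1) = ⇑M.toBase := by
  obtain ⟨hu, hsel⟩ := (exists_measurable_isIso_selector B).choose_spec
  set u := (exists_measurable_isIso_selector B).choose
  refine ⟨fun x n => (selfCopy B).isoSelector.symm (u x n),
    measurable_pi_lambda _ fun n => Measurable.of_discrete.comp ((measurable_pi_apply n).comp hu),
    fun M => funext fun n => ?_⟩
  show (selfCopy B).isoSelector.symm (u (codeStr M.1) n) = _
  rw [← (hsel M.1 M.2).choose_spec.2]
  rfl

theorem exists_measurable_toBase_symm :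
    ∃ v : ObjCode L → ℕ → ℕ, Measurable v ∧ ∀ M : Copy B, v (codeStr M.1) = ⇑M.toBase.symm := by
  obtain ⟨u, hu, hMu⟩ := exists_measurable_toBase B
  exact ⟨_, measurable_leastWitness_eq hu, fun M => funext fun n => by
    simp only [hMu, leastWitness_eq_symm]⟩

theorem exists_measurable_conj :
    ∃ w : ObjCode L × (ℕ → ℕ) × ObjCode L → ℕ → ℕ, Measurable w ∧
      ∀ (M N : Copy B) (g : ℕ ≃ ℕ), w (codeStr M.1, ⇑g, codeStr N.1) = ⇑(M.conj N g) := by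
  obtain ⟨u, hu, hMu⟩ := exists_measurable_toBase B
  obtain ⟨v, hv, hMv⟩ := exists_measurable_toBase_symm B
  refine ⟨fun z n => u z.2.2 (z.2.1 (v z.1 n)), measurable_pi_lambda _ fun n => ?_,
    fun M N g => funext fun n => ?_⟩
  · exact Measurable.apply_nat (hu.comp (measurable_snd.comp measurable_snd))
      (Measurable.apply_nat (measurable_fst.comp measurable_snd)
        ((measurable_pi_apply n).comp (hv.comp measurable_fst)))
  · simp only [hMu, hMv]
    rfl

end BorelToBase

namespace Interp

variable {LA LB : ℕ → ℕ} {A : Str LA} {B : Str LB} (I : Interp A B)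

noncomputable def sec (a : ℕ) : List ℕ := (I.F_surj a).choose

theorem sec_mem (a : ℕ) : I.sec a ∈ I.Dom := (I.F_surj a).choose_spec.1

theorem F_sec (a : ℕ) : I.F (I.sec a) = a := (I.F_surj a).choose_spec.2

theorem eqv_sec_F {l : List ℕ} (hl : l ∈ I.Dom) : I.eqv (I.sec (I.F l)) l :=
  (I.F_eqv _ (I.sec_mem _) _ hl).mp (I.F_sec _)

theorem R_sec_iff (i : ℕ) (v : Fin (LA i) → ℕ) :
    I.R i (fun k => I.sec (v k)) ↔ A.rel i v = true := by
  rw [I.F_rel i _ fun k => I.sec_mem _]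
  simp only [F_sec]

theorem R_map_iff {i : ℕ} {g : Equiv.Perm ℕ} (hg : g ∈ aut B) {v : Fin (LA i) → List ℕ}
    (hv : ∀ k, v k ∈ I.Dom) : I.R i (fun k => (v k).map g) ↔ I.R i v := by
  refine ⟨fun h => ?_, I.R_inv i g hg v hv⟩
  simpa [List.map_map] using
    I.R_inv i g⁻¹ (inv_mem hg) _ (fun k => I.dom_inv g hg _ (hv k)) h

noncomputable def autMap (g : Equiv.Perm ℕ) (a : ℕ) : ℕ := I.F ((I.sec a).map g)

theorem F_map {g : Equiv.Perm ℕ} (hg : g ∈ aut B) {l : List ℕ} (hl : l ∈ I.Dom) :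
    I.F (l.map g) = I.autMap g (I.F l) :=
  ((I.F_eqv _ (I.dom_inv g hg _ hl) _ (I.dom_inv g hg _ (I.sec_mem _))).mpr
    (I.eqv_inv g hg _ hl _ (I.sec_mem _)
      (I.eqv_symm _ (I.sec_mem _) _ hl (I.eqv_sec_F hl))))

theorem autMap_one (a : ℕ) : I.autMap 1 a = a := by
  simp [autMap, F_sec]

theorem autMap_mul {g h : Equiv.Perm ℕ} (hg : g ∈ aut B) (hh : h ∈ aut B) (a : ℕ) :
    I.autMap (g * h) a = I.autMap g (I.autMap h a) := by
  rw [autMap, Equiv.Perm.coe_mul, ← List.map_map, I.F_map hg (I.dom_inv h hh _ (I.sec_mem a))]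
  rfl

theorem isIso_autMap {g : Equiv.Perm ℕ} (hg : g ∈ aut B) (e : ℕ ≃ ℕ) (he : ⇑e = I.autMap g) :
    IsIso A A e := fun i v => by
  rw [Bool.eq_iff_iff, ← I.R_sec_iff, ← I.R_map_iff hg fun k => I.sec_mem _,
    I.F_rel i _ fun k => I.dom_inv g hg _ (I.sec_mem _), he]
  rfl

noncomputable def autHom : aut B →* aut A where
  toFun g :=
    ⟨⟨I.autMap g, I.autMap g⁻¹,
      fun a => by rw [← I.autMap_mul (inv_mem g.2) g.2, inv_mul_cancel, autMap_one],
      fun a => by rw [← I.autMap_mul g.2 (inv_mem g.2), mul_inv_cancel, autMap_one]⟩,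
      I.isIso_autMap g.2 _ rfl⟩
  map_one' := Subtype.ext (Equiv.ext I.autMap_one)
  map_mul' g h := Subtype.ext (Equiv.ext (I.autMap_mul g.2 h.2))

noncomputable def functor : IsoFunctor B A where
  obj _ := selfCopy A
  map M N g hg := I.autHom ⟨M.conj N g, Copy.conj_mem_aut hg⟩
  map_iso M N g hg := (I.autHom _).2
  map_id M _ := by
    simp only [Copy.conj_refl]
    exact congrArg Subtype.val (map_one I.autHom)
  map_comp M N P g₁ h₁ g₂ h₂ h₃ := by
    simp only [Copy.conj_trans M N P]
    exact congrArg Subtype.val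
      (map_mul I.autHom ⟨_, Copy.conj_mem_aut h₂⟩ ⟨_, Copy.conj_mem_aut h₁⟩)

theorem functor_map_selfCopy (h : ℕ ≃ ℕ) (hh : IsIso B B h) :
    I.functor.map (selfCopy B) (selfCopy B) h hh = I.autHom ⟨h, hh⟩ :=
  congrArg (fun g => (I.autHom g : Equiv.Perm ℕ)) (Subtype.ext (selfCopy_conj h))

theorem functor_map_toBase (M : Copy B) (h : IsIso M.1 B M.toBase) :
    I.functor.map M (selfCopy B) M.toBase h = (selfCopy A).toBase := by
  rw [toBase_selfCopy]
  exact (congrArg (fun g => (I.autHom g : Equiv.Perm ℕ)) (Subtype.ext M.conj_toBase)).trans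
    (congrArg Subtype.val (map_one I.autHom))

theorem mem_domIn_iff (M : Copy B) {l : List ℕ} : l ∈ DomIn I M ↔ l.map M.toBase ∈ I.Dom := by
  refine ⟨fun h => h _ M.isIso_toBase, fun h g hg => ?_⟩
  rw [M.map_eq_map_toBase g]
  exact I.dom_inv _ (M.toBase_symm_trans_mem_aut hg) _ h

theorem eqvIn_iff (M : Copy B) {l₁ l₂ : List ℕ} (h₁ : l₁ ∈ DomIn I M) (h₂ : l₂ ∈ DomIn I M) :
    EqvIn I M l₁ l₂ ↔ I.eqv (l₁.map M.toBase) (l₂.map M.toBase) := by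
  refine ⟨fun h => h _ M.isIso_toBase, fun h g hg => ?_⟩
  rw [M.map_eq_map_toBase g l₁, M.map_eq_map_toBase g l₂]
  exact I.eqv_inv _ (M.toBase_symm_trans_mem_aut hg) _ ((I.mem_domIn_iff M).mp h₁) _
    ((I.mem_domIn_iff M).mp h₂) h

theorem rIn_iff (M : Copy B) {i : ℕ} {v : Fin (LA i) → List ℕ} (hv : ∀ k, v k ∈ DomIn I M) :
    RIn I M i v ↔ I.R i fun k => (v k).map M.toBase := by
  refine ⟨fun h => h _ M.isIso_toBase, fun h g hg => ?_⟩
  simp only [M.map_eq_map_toBase g (v _)]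
  exact I.R_inv i _ (M.toBase_symm_trans_mem_aut hg) _ (fun k => (I.mem_domIn_iff M).mp (hv k)) h

/-- The bijection `τ^M : ω → Dom^M/∼` for which the pulled-back structure is `A` itself. -/
noncomputable def enum (M : Copy B) (a : ℕ) : List ℕ := (I.sec a).map M.toBase.symm

theorem map_toBase_enum (M : Copy B) (a : ℕ) : (I.enum M a).map M.toBase = I.sec a := by
  simp [enum, List.map_map, Function.comp_def]

theorem enum_mem_domIn (M : Copy B) (a : ℕ) : I.enum M a ∈ DomIn I M := by
  rw [mem_domIn_iff, map_toBase_enum]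
  exact I.sec_mem a

theorem map_enum_map_toBase (M N : Copy B) (g : ℕ ≃ ℕ) (a : ℕ) :
    ((I.enum M a).map g).map N.toBase = (I.sec a).map (M.conj N g) := by
  simp [enum, Copy.conj, List.map_map, Function.comp_def]

theorem inducedBy_functor : InducedBy I I.functor I.enum := by
  intro M
  refine ⟨I.enum_mem_domIn M, fun l hl => ⟨I.F (l.map M.toBase), ?_⟩, fun a b hab => ?_,
    fun i v => ?_, fun N g hg a => ?_⟩
  · rw [I.eqvIn_iff M (I.enum_mem_domIn M _) hl, map_toBase_enum]
    exact I.eqv_sec_F ((I.mem_domIn_iff M).mp hl)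
  · rw [I.eqvIn_iff M (I.enum_mem_domIn M _) (I.enum_mem_domIn M _), map_toBase_enum,
      map_toBase_enum, ← I.F_eqv _ (I.sec_mem a) _ (I.sec_mem b), F_sec, F_sec] at hab
    exact hab
  · rw [I.rIn_iff M fun k => I.enum_mem_domIn M _]
    simp only [map_toBase_enum]
    exact (I.R_sec_iff i v).symm
  · have hmem : (I.enum M a).map g ∈ DomIn I N := by
      rw [mem_domIn_iff, map_enum_map_toBase]
      exact I.dom_inv _ (Copy.conj_mem_aut hg) _ (I.sec_mem a)
    rw [I.eqvIn_iff N (I.enum_mem_domIn N _) hmem, map_toBase_enum, map_enum_map_toBase]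
    exact I.eqv_sec_F (I.dom_inv _ (Copy.conj_mem_aut hg) _ (I.sec_mem a))

theorem isBorelFunctor_functor : IsBorelFunctor I.functor := by
  obtain ⟨w, hw, hMw⟩ := exists_measurable_conj B
  refine ⟨fun _ => codeStr A, fun z a => I.F ((I.sec a).map (w z)), measurable_const,
    measurable_pi_lambda _ fun a => Measurable.of_discrete.comp ((measurable_list_map _).comp hw),
    fun _ => rfl, fun M N g hg => funext fun a => ?_⟩
  simp only [hMw]
  rfl

end Interp

namespace BiInterp

variable {LA LB : ℕ → ℕ} {A : Str LA} {B : Str LB} (bi : BiInterp A B)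

def symm : BiInterp B A := ⟨bi.J, bi.I, bi.comp_def_A, bi.comp_def_B⟩

/-- The definability of `f^A_B ∘ f̃^B_A` says exactly that `Aut(B) → Aut(A) → Aut(B)` is the
identity. -/
theorem autHom_autHom (g : aut B) : bi.J.autHom (bi.I.autHom g) = g := by
  refine Subtype.ext (Equiv.ext fun b => ?_)
  have hcomp := bi.comp_def_B g g.2 ((bi.J.sec b).map bi.I.sec)
    (by simp [bi.I.sec_mem]) (by simpa [Function.comp_def, Interp.F_sec] using bi.J.sec_mem b)
  show bi.J.F ((bi.J.sec b).map fun a => bi.I.F ((bi.I.sec a).map (g : Equiv.Perm ℕ))) =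
    (g : Equiv.Perm ℕ) b
  simpa [Function.comp_def, Interp.F_sec] using hcomp

theorem toBase_trans_functor_map (M M' : Copy B) (g : ℕ ≃ ℕ) (hg : IsIso M.1 M'.1 g) :
    M.toBase.trans (bi.J.functor.map (bi.I.functor.obj M) (bi.I.functor.obj M')
      (bi.I.functor.map M M' g hg) (bi.I.functor.map_iso M M' g hg)) = g.trans M'.toBase := by
  have hmap : bi.J.functor.map (bi.I.functor.obj M) (bi.I.functor.obj M')
      (bi.I.functor.map M M' g hg) (bi.I.functor.map_iso M M' g hg) = M.conj M' g :=
    (bi.J.functor_map_selfCopy _ _).trans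
      (congrArg Subtype.val (bi.autHom_autHom ⟨_, Copy.conj_mem_aut hg⟩))
  rw [hmap]
  ext n
  simp [Copy.conj]

noncomputable def adjEquiv : AdjEquiv B A where
  F := bi.I.functor
  G := bi.J.functor
  η M := M.toBase
  ε N := N.toBase
  η_iso M := M.isIso_toBase
  ε_iso N := N.isIso_toBase
  η_nat := bi.toBase_trans_functor_map
  ε_nat := bi.symm.toBase_trans_functor_map
  triangleF M := bi.I.functor_map_toBase M _
  triangleG N := bi.J.functor_map_toBase N _

end BiInterp

/-- **Theorem 1.12.** Let `B` and `A` be countable structures.  For every infinitary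
bi-interpretation `(I, J)` of `A` and `B`, the induced functors `F_I : Iso(B) → Iso(A)`
and `F_J : Iso(A) → Iso(B)` form a Borel adjoint equivalence of the categories
`Iso(B)` and `Iso(A)`. -/
theorem biinterp_to_adj_equiv (LA LB : ℕ → ℕ) (A : Str LA) (B : Str LB)
    (bi : BiInterp A B) :
    ∃ (E : AdjEquiv B A) (τ : Copy B → ℕ → List ℕ) (ρ : Copy A → ℕ → List ℕ),
      InducedBy bi.I E.F τ ∧ InducedBy bi.J E.G ρ ∧ IsBorelAdjEquiv E :=
  ⟨bi.adjEquiv, bi.I.enum, bi.J.enum, bi.I.inducedBy_functor, bi.J.inducedBy_functor,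
    bi.I.isBorelFunctor_functor, bi.J.isBorelFunctor_functor,
    exists_measurable_toBase B, exists_measurable_toBase A⟩

end Paper
end

section
/- Let B and A be countable structures. For every Borel adjoint equivalence of categories (F, G, η, ε) between Iso(B) and Iso(A) there is an infinitary bi-interpretation (I, J) between A and B such that F is naturally isomorphic to F_I and G is naturally isomorphic to F_J. -/
/-!
Fix an isomorphism `e : F(B) ≅ A`. Conjugating by `e` turns `F` into a homomorphism
`ρ : Aut(B) → Aut(A)`, and `G`, conjugated by the isomorphism `G(A) ≅ B` that `e` and `η`
determine, into `σ : Aut(A) → Aut(B)`; naturality of `η`, `ε` and the triangle identity make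
`ρ` and `σ` mutually inverse. As `F` is Borel, `ρ` is a Borel homomorphism of Polish groups,
so by Pettis' argument every `a ∈ A` is fixed by `ρ u` as soon as `u` fixes some finite tuple
`s a`. Then `A` is interpreted in `B` on the `Aut(B)`-orbits of the tuples `s a`, by
`u · s a ↦ ρ u a`; the functor this interpretation induces is naturally isomorphic to `F`, and
`σ ∘ ρ = id`, `ρ ∘ σ = id` make the two composite maps automorphism-invariant.
-/

section Baire

variable {X : Type*} [TopologicalSpace X]

theorem exists_not_isMeagre_preimage_singleton [BaireSpace X] [Nonempty X] {β : Type*}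
    [Countable β] (f : X → β) : ∃ b, ¬ IsMeagre (f ⁻¹' {b}) := by
  by_contra! h
  refine not_isMeagre_of_isOpen isOpen_univ (Set.univ_nonempty (α := X)) ?_
  simpa [← Set.preimage_iUnion, Set.iUnion_of_singleton] using isMeagre_iUnion h

theorem BaireMeasurableSet.exists_isOpen_diff_isMeagre {T : Set X} (hT : BaireMeasurableSet T)
    (hT' : ¬ IsMeagre T) : ∃ U, IsOpen U ∧ U.Nonempty ∧ IsMeagre (U \ T) := by
  obtain ⟨U, hU, hTU⟩ := hT.residualEq_isOpen
  have hdiff : IsMeagre {x | ¬ (x ∈ T ↔ x ∈ U)} :=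
    (Filter.eventuallyEq_set.mp hTU).mono fun _ hx hx' => hx' hx
  refine ⟨U, hU, Set.nonempty_iff_ne_empty.2 ?_, hdiff.mono fun x hx => by simp_all⟩
  rintro rfl
  exact hT' (hdiff.mono fun x hx => by simpa using hx)

theorem exists_mem_and_apply_mem [BaireSpace X] {T U W : Set X} (hUT : IsMeagre (U \ T))
    (hW : IsOpen W) (hWne : W.Nonempty) (hWU : W ⊆ U) {φ : X → X} (hφc : Continuous φ)
    (hφo : IsOpenMap φ) (hφ : Set.MapsTo φ W U) : ∃ x ∈ T, φ x ∈ T := by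
  by_contra! h
  refine not_isMeagre_of_isOpen hW hWne
    ((hUT.union (hUT.preimage_of_isOpenMap hφc hφo)).mono fun x hx => ?_)
  by_cases hxT : x ∈ T
  · exact Or.inr ⟨hφ hx, h x hxT⟩
  · exact Or.inl ⟨hWU hx, hxT⟩

theorem PiNat.exists_cylinder_subset {E : Type*} [TopologicalSpace E] [DiscreteTopology E]
    {V : Set (ℕ → E)} (hV : IsOpen V) {x : ℕ → E} (hx : x ∈ V) :
    ∃ n, PiNat.cylinder x n ⊆ V := by
  obtain ⟨_, ⟨y, n, rfl⟩, hxy, hsub⟩ :=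
    (PiNat.isTopologicalBasis_cylinders _).exists_subset_of_mem_open hx hV
  exact ⟨n, PiNat.mem_cylinder_iff_eq.1 hxy ▸ hsub⟩

end Baire

namespace Paper

section IsoLemmas

variable {L : ℕ → ℕ} {M N P : Str L} {f g : Equiv.Perm ℕ}

theorem isIso_mul (hg : IsIso N P g) (hf : IsIso M N f) : IsIso M P (g * f) := fun i v =>
  (hf i v).trans (hg i _)

theorem isIso_inv (hg : IsIso M N g) : IsIso N M g⁻¹ := fun i v => by
  simpa using (hg i fun k => g⁻¹ (v k)).symm

end IsoLemmas

noncomputable def copyIso {L : ℕ → ℕ} {C : Str L} (M : Copy C) : Equiv.Perm ℕ := M.2.choose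

theorem copyIso_isIso {L : ℕ → ℕ} {C : Str L} (M : Copy C) : IsIso M.1 C (copyIso M) :=
  M.2.choose_spec

/-- The automorphism of `C` that `g : M ≅ N` becomes under the chosen identifications of the
copies `M` and `N` with `C`. -/
noncomputable def autOfIso {L : ℕ → ℕ} {C : Str L} {M N : Copy C} {g : Equiv.Perm ℕ} (hg : IsIso M.1 N.1 g) : aut C :=
  ⟨copyIso N * g * (copyIso M)⁻¹,
    isIso_mul (isIso_mul (copyIso_isIso N) hg) (isIso_inv (copyIso_isIso M))⟩

namespace IsoFunctor

variable {LC LD : ℕ → ℕ} {C : Str LC} {D : Str LD} (H : IsoFunctor C D) {M N P : Copy C}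

theorem map_congr {g g' : Equiv.Perm ℕ} (h : g = g') (hg : IsIso M.1 N.1 g)
    (hg' : IsIso M.1 N.1 g') : H.map M N g hg = H.map M N g' hg' := by
  subst h; rfl

theorem map_mul {f g : Equiv.Perm ℕ} (hf : IsIso M.1 N.1 f) (hg : IsIso N.1 P.1 g)
    (hgf : IsIso M.1 P.1 (g * f)) : H.map M P (g * f) hgf = H.map N P g hg * H.map M N f hf :=
  H.map_comp M N P f hf g hg hgf

theorem map_one (h : IsIso M.1 M.1 1) : H.map M M 1 h = 1 := H.map_id M h

theorem map_inv {g : Equiv.Perm ℕ} (hg : IsIso M.1 N.1 g) (hg' : IsIso N.1 M.1 g⁻¹) :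
    H.map N M g⁻¹ hg' = (H.map M N g hg)⁻¹ := by
  refine eq_inv_of_mul_eq_one_left ?_
  rw [← H.map_mul hg hg' (isIso_mul hg' hg), H.map_congr (inv_mul_cancel g) _ (isIso_refl _),
    H.map_one]

theorem map_conj {c g : Equiv.Perm ℕ} (hc : IsIso M.1 N.1 c) (hg : IsIso M.1 M.1 g)
    (h : IsIso N.1 N.1 (c * g * c⁻¹)) :
    H.map N N (c * g * c⁻¹) h = H.map M N c hc * H.map M M g hg * (H.map M N c hc)⁻¹ := by
  rw [H.map_mul (isIso_inv hc) (isIso_mul hc hg), H.map_mul hg hc, H.map_inv hc]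

/-- `H` acting on `aut C`, transported to `aut D` along an identification `d` of `H(C)`
with `D`. -/
noncomputable def conjHom {d : Equiv.Perm ℕ} (hd : IsIso (H.obj (selfCopy C)).1 D d) :
    aut C →* aut D where
  toFun u := ⟨d * H.map (selfCopy C) (selfCopy C) u (mem_aut (M := C) u.2) * d⁻¹,
    isIso_mul (isIso_mul hd (H.map_iso _ _ _ _)) (isIso_inv hd)⟩
  map_one' := by
    ext x
    simp [H.map_one]
  map_mul' u v := by
    ext x
    simp [H.map_mul (M := selfCopy C) (N := selfCopy C) (P := selfCopy C) (mem_aut v.2)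
      (mem_aut u.2)]

theorem conjHom_apply {d : Equiv.Perm ℕ} (hd : IsIso (H.obj (selfCopy C)).1 D d) (u : aut C) :
    (H.conjHom hd u : Equiv.Perm ℕ) =
      d * H.map (selfCopy C) (selfCopy C) u (mem_aut (M := C) u.2) * d⁻¹ := rfl

end IsoFunctor

section AutGraph

variable {L : ℕ → ℕ} (C : Str L)

/-- `g ↦ (n ↦ (g n, g⁻¹ n))` embeds `Equiv.Perm ℕ` into Baire space `ℕ → ℕ × ℕ`; on `aut C` its
image is closed, so unlike `aut C ⊆ ℕ → ℕ` it is a Polish space. -/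
def permGraph (g : Equiv.Perm ℕ) : ℕ → ℕ × ℕ := fun n => (g n, g⁻¹ n)

def autGraph : Set (ℕ → ℕ × ℕ) := permGraph '' aut C

theorem autGraph_eq : autGraph C = {p | (∀ n, (p (p n).1).2 = n) ∧ (∀ n, (p (p n).2).1 = n) ∧
    ∀ i v, C.rel i v = C.rel i fun k => (p (v k)).1} := by
  ext p
  constructor
  · rintro ⟨g, hg, rfl⟩
    exact ⟨fun n => by simp [permGraph], fun n => by simp [permGraph], hg⟩
  · rintro ⟨h₁, h₂, h₃⟩
    exact ⟨⟨fun n => (p n).1, fun n => (p n).2, h₁, h₂⟩, h₃, rfl⟩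

theorem isClosed_autGraph : IsClosed (autGraph C) := by
  have hev : ∀ n m, Continuous fun p : ℕ → ℕ × ℕ => (p n, p m) := fun n m => by fun_prop
  have h₁ : ∀ n, {p : ℕ → ℕ × ℕ | (p (p n).1).2 = n} =
      ⋂ m, (fun p => (p n, p m)) ⁻¹' {q | q.1.1 = m → q.2.2 = n} := fun n => by
    ext p; simp
  have h₂ : ∀ n, {p : ℕ → ℕ × ℕ | (p (p n).2).1 = n} =
      ⋂ m, (fun p => (p n, p m)) ⁻¹' {q | q.1.2 = m → q.2.1 = n} := fun n => by
    ext p; simp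
  rw [autGraph_eq, Set.ofPred_and, Set.ofPred_and, Set.ofPred_forall, Set.ofPred_forall]
  refine .inter (isClosed_iInter fun n => ?_) (.inter (isClosed_iInter fun n => ?_) ?_)
  · rw [h₁ n]
    exact isClosed_iInter fun m => (isClosed_discrete _).preimage (hev n m)
  · rw [h₂ n]
    exact isClosed_iInter fun m => (isClosed_discrete _).preimage (hev n m)
  · simp only [Set.ofPred_forall]
    exact isClosed_iInter fun i => isClosed_iInter fun v =>
      IsClosed.preimage (f := fun (p : ℕ → ℕ × ℕ) (k : Fin (L i)) => p (v k))
        (continuous_pi fun k => continuous_apply (v k))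
        (isClosed_discrete {w : Fin (L i) → ℕ × ℕ | C.rel i v = C.rel i fun k => (w k).1})

variable {C}

/-- Right translation `x ↦ x * h`, read on graphs. -/
def graphMulRight (h : Equiv.Perm ℕ) (p : ℕ → ℕ × ℕ) : ℕ → ℕ × ℕ :=
  fun n => ((p (h n)).1, h⁻¹ (p n).2)

theorem graphMulRight_permGraph (h g : Equiv.Perm ℕ) :
    graphMulRight h (permGraph g) = permGraph (g * h) := rfl

theorem graphMulRight_graphMulRight (h k : Equiv.Perm ℕ) (p : ℕ → ℕ × ℕ) :
    graphMulRight h (graphMulRight k p) = graphMulRight (k * h) p := rfl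

theorem graphMulRight_one (p : ℕ → ℕ × ℕ) : graphMulRight 1 p = p := rfl

theorem continuous_graphMulRight (h : Equiv.Perm ℕ) : Continuous (graphMulRight h) :=
  continuous_pi fun n => ((continuous_apply (h n)).fst).prodMk
    ((continuous_of_discreteTopology (f := ⇑h⁻¹)).comp (continuous_apply n).snd)

theorem graphMulRight_mem {h : Equiv.Perm ℕ} (hh : h ∈ aut C) {p : ℕ → ℕ × ℕ}
    (hp : p ∈ autGraph C) : graphMulRight h p ∈ autGraph C := by
  obtain ⟨g, hg, rfl⟩ := hp
  exact ⟨g * h, mul_mem hg hh, rfl⟩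

def autGraphMulRight (h : aut C) : autGraph C ≃ₜ autGraph C where
  toFun x := ⟨graphMulRight h x, graphMulRight_mem h.2 x.2⟩
  invFun x := ⟨graphMulRight (h⁻¹ : aut C) x, graphMulRight_mem (h⁻¹).2 x.2⟩
  left_inv x := by simp [graphMulRight_graphMulRight, graphMulRight_one]
  right_inv x := by simp [graphMulRight_graphMulRight, graphMulRight_one]
  continuous_toFun :=
    ((continuous_graphMulRight _).comp continuous_subtype_val).subtype_mk _
  continuous_invFun :=
    ((continuous_graphMulRight _).comp continuous_subtype_val).subtype_mk _

/-- Pettis' argument: a fibre `T` of `g ↦ π g a` is nonmeagre, so it is comeagre in a basic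
open set `W` of `autGraph C`; right translation by an `h` fixing the finite set that defines
`W` maps `W` to itself, hence `T ∩ T h⁻¹` meets `W`, and `g, g h ∈ T` gives `π h a = a`. -/
theorem exists_support_of_measurable (π : aut C →* Equiv.Perm ℕ) {Θ : (ℕ → ℕ) → ℕ → ℕ}
    (hΘ : Measurable Θ) (hπ : ∀ g : aut C, ⇑(π g) = Θ ⇑(g : Equiv.Perm ℕ)) (a : ℕ) :
    ∃ s : List ℕ, ∀ h : aut C, (∀ x ∈ s, (h : Equiv.Perm ℕ) x = x) → π h a = a := by
  have := (isClosed_autGraph C).polishSpace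
  have : Nonempty (autGraph C) := ⟨⟨_, 1, one_mem _, rfl⟩⟩
  let f : autGraph C → ℕ := fun x => Θ (fun n => (x.1 n).1) a
  have hf : Measurable f := (measurable_pi_apply a).comp (hΘ.comp (measurable_pi_lambda _
    fun n => measurable_fst.comp ((measurable_pi_apply n).comp measurable_subtype_coe)))
  have hfπ : ∀ (x : autGraph C) (g : aut C), permGraph g = x.1 → f x = π g a := by
    intro x g hx
    simp [f, ← hx, hπ, permGraph]
  obtain ⟨b, hb⟩ := exists_not_isMeagre_preimage_singleton f
  obtain ⟨U, hU, ⟨x₀, hx₀⟩, hUT⟩ :=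
    (hf (measurableSet_singleton b)).baireMeasurableSet.exists_isOpen_diff_isMeagre hb
  obtain ⟨V, hV, rfl⟩ := isOpen_induced_iff.mp hU
  obtain ⟨n, hn⟩ := PiNat.exists_cylinder_subset hV hx₀
  refine ⟨List.range n ++ (List.range n).map fun i => (x₀.1 i).2, fun h hfix => ?_⟩
  have hmaps : Set.MapsTo (autGraphMulRight h) (Subtype.val ⁻¹' PiNat.cylinder x₀.1 n)
      (Subtype.val ⁻¹' PiNat.cylinder x₀.1 n) := fun x hx i hi => by
    have hi' := List.mem_range.2 hi
    have hhi : (h : Equiv.Perm ℕ) i = i := hfix i (List.mem_append_left _ hi')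
    have hhx : (h : Equiv.Perm ℕ)⁻¹ (x₀.1 i).2 = (x₀.1 i).2 := Equiv.Perm.inv_eq_iff_eq.2
      (hfix _ (List.mem_append_right _ (List.mem_map_of_mem hi'))).symm
    change ((x.1 ((h : Equiv.Perm ℕ) i)).1, (h : Equiv.Perm ℕ)⁻¹ (x.1 i).2) = x₀.1 i
    rw [hhi, hx i hi, hhx]
  obtain ⟨y, hy, hhy⟩ := exists_mem_and_apply_mem hUT
    ((PiNat.isOpen_cylinder _ _ _).preimage continuous_subtype_val)
    ⟨x₀, PiNat.self_mem_cylinder _ _⟩ (fun x hx => hn hx) (autGraphMulRight h).continuous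
    (autGraphMulRight h).isOpenMap fun x hx => hn (hmaps hx)
  obtain ⟨g, hg, hgy⟩ := y.2
  have hga : π ⟨g, hg⟩ a = b := (hfπ y ⟨g, hg⟩ hgy).symm.trans hy
  have hgha : π (⟨g, hg⟩ * h) a = b :=
    (hfπ _ _ ((graphMulRight_permGraph h g).symm.trans (congrArg _ hgy))).symm.trans hhy
  rw [map_mul, Equiv.Perm.mul_apply, ← hga] at hgha
  exact (π _).injective hgha

end AutGraph

theorem IsBorelFunctor.exists_support_conjHom {LC LD : ℕ → ℕ} {C : Str LC} {D : Str LD}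
    {H : IsoFunctor C D} (hH : IsBorelFunctor H) {d : Equiv.Perm ℕ}
    (hd : IsIso (H.obj (selfCopy C)).1 D d) (a : ℕ) :
    ∃ s : List ℕ, ∀ u : aut C, (∀ x ∈ s, (u : Equiv.Perm ℕ) x = x) →
      (H.conjHom hd u : Equiv.Perm ℕ) a = a := by
  obtain ⟨-, Ψ, -, hΨ, -, hHΨ⟩ := hH
  refine exists_support_of_measurable ((aut D).subtype.comp (H.conjHom hd))
    (Θ := fun y => ⇑d ∘ Ψ (codeStr C, y, codeStr C) ∘ ⇑d⁻¹) ?_ (fun u => ?_) a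
  · exact measurable_pi_lambda _ fun x => measurable_from_top.comp
      ((measurable_pi_apply _).comp (hΨ.comp (by fun_prop)))
  · ext x
    change d (H.map (selfCopy C) (selfCopy C) u (mem_aut u.2) (d⁻¹ x)) = d (Ψ _ (d⁻¹ x))
    rw [hHΨ]
    rfl

theorem list_map_eq_map_mul_inv (c h : Equiv.Perm ℕ) (l : List ℕ) :
    l.map h = (l.map c).map ⇑(h * c⁻¹) := by
  simp [Function.comp_def]

section Transfer

variable {LA LB : ℕ → ℕ} {A : Str LA} {B : Str LB} (I : Interp A B) {M : Copy B}
  {c : Equiv.Perm ℕ}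

theorem mem_domIn_iff (hc : IsIso M.1 B c) {l : List ℕ} : l ∈ DomIn I M ↔ l.map c ∈ I.Dom :=
  ⟨fun hl => hl c hc, fun hl h hh => by
    rw [list_map_eq_map_mul_inv c]
    exact I.dom_inv _ (isIso_mul hh (isIso_inv hc)) _ hl⟩

theorem eqvIn_iff (hc : IsIso M.1 B c) {l₁ l₂ : List ℕ} (h₁ : l₁ ∈ DomIn I M)
    (h₂ : l₂ ∈ DomIn I M) : EqvIn I M l₁ l₂ ↔ I.eqv (l₁.map c) (l₂.map c) :=
  ⟨fun he => he c hc, fun he h hh => by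
    rw [list_map_eq_map_mul_inv c h l₁, list_map_eq_map_mul_inv c h l₂]
    exact I.eqv_inv _ (isIso_mul hh (isIso_inv hc)) _ (h₁ c hc) _ (h₂ c hc) he⟩

theorem rIn_iff (hc : IsIso M.1 B c) {k : ℕ} {v : Fin (LA k) → List ℕ}
    (hv : ∀ t, v t ∈ DomIn I M) : RIn I M k v ↔ I.R k fun t => (v t).map c :=
  ⟨fun hR => hR c hc, fun hR h hh => by
    simp_rw [list_map_eq_map_mul_inv c h]
    exact I.R_inv k _ (isIso_mul hh (isIso_inv hc)) _ (fun t => hv t c hc) hR⟩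

end Transfer

/-- A homomorphism `aut C → aut D` in which every `a` has a finite support `support a`.
The lengths of the supports separate them, so that a tuple in the `aut C`-orbit of
`support a` determines `a`. -/
structure SupportedHom {LC LD : ℕ → ℕ} (C : Str LC) (D : Str LD) where
  hom : aut C →* aut D
  support : ℕ → List ℕ
  hom_apply_eq_of_fixes : ∀ (a : ℕ) (u : aut C),
    (∀ x ∈ support a, (u : Equiv.Perm ℕ) x = x) → (hom u : Equiv.Perm ℕ) a = a
  length_support_injective : Function.Injective fun a => (support a).length

namespace SupportedHom

variable {LC LD : ℕ → ℕ} {C : Str LC} {D : Str LD}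

/-- Pads chosen supports with zeros to length `Nat.pair a _`, which makes the lengths
injective. -/
noncomputable def ofSupports (ρ : aut C →* aut D)
    (hρ : ∀ a, ∃ s : List ℕ, ∀ u : aut C,
      (∀ x ∈ s, (u : Equiv.Perm ℕ) x = x) → (ρ u : Equiv.Perm ℕ) a = a) :
    SupportedHom C D where
  hom := ρ
  support a := (hρ a).choose ++ List.replicate (Nat.pair a (hρ a).choose.length -
    (hρ a).choose.length) 0
  hom_apply_eq_of_fixes a u hu :=
    (hρ a).choose_spec u fun x hx => hu x (List.mem_append_left _ hx)
  length_support_injective a b hab := by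
    have hlen : ∀ a, ((hρ a).choose ++ List.replicate (Nat.pair a (hρ a).choose.length -
        (hρ a).choose.length) 0).length = Nat.pair a (hρ a).choose.length := fun a => by
      simp [Nat.right_le_pair]
    simpa only [hlen, Nat.unpair_pair] using congrArg (fun n => (Nat.unpair n).1) hab

variable (P : SupportedHom C D)

def tuple (p : ℕ × aut C) : List ℕ := (P.support p.1).map (p.2 : Equiv.Perm ℕ)

def dom : Set (List ℕ) := Set.range P.tuple

noncomputable def decode (l : List ℕ) : ℕ :=
  (P.hom (Function.invFun P.tuple l).2 : Equiv.Perm ℕ) (Function.invFun P.tuple l).1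

theorem hom_apply_eq_of_tuple_eq {p q : ℕ × aut C} (h : P.tuple p = P.tuple q) :
    (P.hom p.2 : Equiv.Perm ℕ) p.1 = (P.hom q.2 : Equiv.Perm ℕ) q.1 := by
  obtain ⟨a, u⟩ := p
  obtain ⟨b, w⟩ := q
  obtain rfl : a = b := P.length_support_injective (by simpa [tuple] using congrArg List.length h)
  have hfix : ∀ x ∈ P.support a, ((u⁻¹ * w : aut C) : Equiv.Perm ℕ) x = x := fun x hx => by
    simp [(List.map_inj_left.mp h x hx).symm]
  have := congrArg (P.hom u : Equiv.Perm ℕ) (P.hom_apply_eq_of_fixes a _ hfix)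
  simpa [Equiv.Perm.mul_apply] using this.symm

theorem decode_tuple (p : ℕ × aut C) : P.decode (P.tuple p) = (P.hom p.2 : Equiv.Perm ℕ) p.1 :=
  P.hom_apply_eq_of_tuple_eq (Function.invFun_eq ⟨p, rfl⟩)

theorem support_mem_dom (a : ℕ) : P.support a ∈ P.dom := ⟨(a, 1), by simp [tuple]⟩

theorem decode_support (a : ℕ) : P.decode (P.support a) = a := by
  simpa [tuple] using P.decode_tuple (a, 1)

theorem map_mem_dom (u : aut C) {l : List ℕ} (hl : l ∈ P.dom) :
    l.map (u : Equiv.Perm ℕ) ∈ P.dom := by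
  obtain ⟨⟨a, w⟩, rfl⟩ := hl
  exact ⟨(a, u * w), by simp [tuple, Function.comp_def]⟩

theorem decode_map (u : aut C) {l : List ℕ} (hl : l ∈ P.dom) :
    P.decode (l.map (u : Equiv.Perm ℕ)) = (P.hom u : Equiv.Perm ℕ) (P.decode l) := by
  obtain ⟨⟨a, w⟩, rfl⟩ := hl
  have : (P.tuple (a, w)).map (u : Equiv.Perm ℕ) = P.tuple (a, u * w) := by
    simp [tuple, Function.comp_def]
  rw [this, P.decode_tuple, P.decode_tuple, map_mul, Subgroup.coe_mul, Equiv.Perm.mul_apply]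

noncomputable def interp : Interp D C where
  Dom := P.dom
  eqv l₁ l₂ := l₁ ∈ P.dom ∧ l₂ ∈ P.dom ∧ P.decode l₁ = P.decode l₂
  R i v := (∀ k, v k ∈ P.dom) ∧ D.rel i (fun k => P.decode (v k)) = true
  F := P.decode
  dom_inv g hg _ hl := P.map_mem_dom ⟨g, hg⟩ hl
  eqv_inv g hg _ h₁ _ h₂ h := ⟨P.map_mem_dom ⟨g, hg⟩ h₁, P.map_mem_dom ⟨g, hg⟩ h₂, by
    rw [P.decode_map ⟨g, hg⟩ h₁, P.decode_map ⟨g, hg⟩ h₂, h.2.2]⟩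
  R_inv i g hg v hv h := ⟨fun k => P.map_mem_dom ⟨g, hg⟩ (hv k), by
    simpa only [P.decode_map ⟨g, hg⟩ (hv _), ← (P.hom ⟨g, hg⟩).2 i] using h.2⟩
  eqv_refl _ hl := ⟨hl, hl, rfl⟩
  eqv_symm _ _ _ _ h := ⟨h.2.1, h.1, h.2.2.symm⟩
  eqv_trans _ _ _ _ _ _ h h' := ⟨h.1, h'.2.1, h.2.2.trans h'.2.2⟩
  R_resp _ v w _ hw hvw h := ⟨hw, by simpa only [(hvw _).2.2] using h.2⟩
  F_surj a := ⟨P.support a, P.support_mem_dom a, P.decode_support a⟩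
  F_eqv _ h₁ _ h₂ := ⟨fun h => ⟨h₁, h₂, h⟩, fun h => h.2.2⟩
  F_rel _ _ hv := ⟨And.right, fun h => ⟨hv, h⟩⟩

noncomputable def functor : IsoFunctor C D where
  obj _ := selfCopy D
  map _ _ _ hg := P.hom (autOfIso hg)
  map_iso _ _ _ hg := (P.hom (autOfIso hg)).2
  map_id M h := by
    have : autOfIso h = 1 := Subtype.ext (by ext; simp [autOfIso])
    rw [this, map_one]
    rfl
  map_comp M N Q g₁ h₁ g₂ h₂ h₃ := by
    have : autOfIso h₃ = autOfIso h₂ * autOfIso h₁ :=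
      Subtype.ext (by ext; simp [autOfIso])
    rw [this, map_mul]
    rfl

noncomputable def tau (M : Copy C) (a : ℕ) : List ℕ := (P.support a).map ⇑(copyIso M)⁻¹

theorem tau_map_copyIso (M : Copy C) (a : ℕ) : (P.tau M a).map (copyIso M) = P.support a := by
  simp [tau, Function.comp_def]

theorem tau_mem_domIn (M : Copy C) (a : ℕ) : P.tau M a ∈ DomIn P.interp M := by
  rw [mem_domIn_iff _ (copyIso_isIso M), tau_map_copyIso]
  exact P.support_mem_dom a

theorem eqvIn_tau_iff {M : Copy C} {a : ℕ} {l : List ℕ} (hl : l ∈ DomIn P.interp M) :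
    EqvIn P.interp M (P.tau M a) l ↔ a = P.decode (l.map (copyIso M)) := by
  rw [eqvIn_iff _ (copyIso_isIso M) (P.tau_mem_domIn M a) hl, tau_map_copyIso]
  refine ⟨fun h => (P.decode_support a).symm.trans h.2.2, fun h => ⟨P.support_mem_dom a, ?_, ?_⟩⟩
  · exact (mem_domIn_iff _ (copyIso_isIso M)).1 hl
  · rw [P.decode_support, h]

theorem inducedBy : InducedBy P.interp P.functor P.tau := by
  intro M
  have hc := copyIso_isIso M
  refine ⟨P.tau_mem_domIn M, fun l hl => ⟨_, (P.eqvIn_tau_iff hl).2 rfl⟩,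
    fun a b h => ?_, fun k v => ?_, fun N g hg a => ?_⟩
  · rw [P.eqvIn_tau_iff (P.tau_mem_domIn M b), tau_map_copyIso, decode_support] at h
    exact h
  · show D.rel k v = true ↔ _
    rw [rIn_iff _ hc fun t => P.tau_mem_domIn M (v t)]
    simp only [tau_map_copyIso]
    exact ⟨fun h => ⟨fun t => P.support_mem_dom _, by simpa [decode_support] using h⟩,
      fun h => by simpa [decode_support] using h.2⟩
  · have hmap : ((P.tau M a).map g).map (copyIso N) =
        (P.support a).map (autOfIso hg : Equiv.Perm ℕ) := by
      simp [tau, autOfIso, Function.comp_def]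
    have hgτ : (P.tau M a).map g ∈ DomIn P.interp N := by
      rw [mem_domIn_iff _ (copyIso_isIso N), hmap]
      exact P.map_mem_dom _ (P.support_mem_dom a)
    rw [P.eqvIn_tau_iff hgτ, hmap, P.decode_map _ (P.support_mem_dom a), decode_support]
    rfl

theorem natIso (H : IsoFunctor C D) {d : Equiv.Perm ℕ}
    (hd : IsIso (H.obj (selfCopy C)).1 D d) (hP : P.hom = H.conjHom hd) :
    NatIso H P.functor := by
  refine ⟨fun M => d * H.map M (selfCopy C) (copyIso M) (copyIso_isIso M),
    fun M => isIso_mul hd (H.map_iso _ _ _ _), fun M N g hg => ?_⟩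
  have hu : (autOfIso hg : Equiv.Perm ℕ) * copyIso M = copyIso N * g := by
    simp [autOfIso, mul_assoc]
  have hcM := copyIso_isIso M
  have hcN := copyIso_isIso N
  change (P.hom (autOfIso hg) : Equiv.Perm ℕ) * (d * H.map M (selfCopy C) (copyIso M) hcM) =
    d * H.map N (selfCopy C) (copyIso N) hcN * H.map M N g hg
  have hu' := mem_aut (M := C) (autOfIso hg).2
  rw [hP, H.conjHom_apply]
  calc _ = d * H.map M (selfCopy C) (_ * copyIso M) (isIso_mul hu' hcM) := by
        rw [H.map_mul (N := selfCopy C) (P := selfCopy C) hcM hu']; group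
    _ = d * H.map M (selfCopy C) (copyIso N * g) (isIso_mul hcN hg) := by
        rw [H.map_congr hu]
    _ = _ := by rw [H.map_mul hg hcN, mul_assoc]

theorem decode_decode_map (Q : SupportedHom D C)
    (hQP : ∀ u, Q.hom (P.hom u) = u) {g : Equiv.Perm ℕ} (hg : g ∈ aut C)
    {LL : List (List ℕ)} (hLL : ∀ l ∈ LL, l ∈ P.dom) (hmem : LL.map P.decode ∈ Q.dom) :
    Q.decode ((LL.map (List.map g)).map P.decode) = g (Q.decode (LL.map P.decode)) := by
  have hmap : (LL.map (List.map g)).map P.decode =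
      (LL.map P.decode).map (P.hom ⟨g, hg⟩ : Equiv.Perm ℕ) := by
    simp only [List.map_map]
    exact List.map_congr_left fun l hl => P.decode_map ⟨g, hg⟩ (hLL l hl)
  rw [hmap, Q.decode_map _ hmem, hQP]

noncomputable def biInterp (Q : SupportedHom D C) (hQP : ∀ u, Q.hom (P.hom u) = u)
    (hPQ : ∀ v, P.hom (Q.hom v) = v) : BiInterp D C where
  I := P.interp
  J := Q.interp
  comp_def_B _ hg _ hLL hmem := P.decode_decode_map Q hQP hg hLL hmem
  comp_def_A _ hg _ hLL hmem := Q.decode_decode_map P hPQ hg hLL hmem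

end SupportedHom

namespace AdjEquiv

variable {LA LB : ℕ → ℕ} {A : Str LA} {B : Str LB} (E : AdjEquiv B A) {e : Equiv.Perm ℕ}
  (he : IsIso (E.F.obj (selfCopy B)).1 A e)

/-- The identification of `G(A)` with `B` that corresponds to `e : F(B) ≅ A` under `η`. -/
noncomputable def isoOfGObj : Equiv.Perm ℕ :=
  (E.G.map (E.F.obj (selfCopy B)) (selfCopy A) e he * E.η (selfCopy B))⁻¹

theorem isoOfGObj_isIso : IsIso (E.G.obj (selfCopy A)).1 B (E.isoOfGObj he) :=
  isIso_inv (isIso_mul (E.G.map_iso _ _ _ he) (E.η_iso (selfCopy B)))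

theorem conjHom_G_conjHom_F (g : aut B) :
    E.G.conjHom (E.isoOfGObj_isIso he) (E.F.conjHom he g) = g := by
  have hg := mem_aut (M := B) g.2
  have hGF : E.G.map (selfCopy A) (selfCopy A) (E.F.conjHom he g)
      (mem_aut (E.F.conjHom he g).2) =
      E.G.map _ (selfCopy A) e he * E.G.map _ _ _ (E.F.map_iso _ _ _ hg) *
        (E.G.map _ (selfCopy A) e he)⁻¹ :=
    E.G.map_conj he (E.F.map_iso _ _ _ hg) _
  have hη : E.G.map _ _ _ (E.F.map_iso _ _ _ hg) * E.η (selfCopy B) = E.η (selfCopy B) * g :=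
    E.η_nat (selfCopy B) (selfCopy B) _ hg
  ext1
  rw [IsoFunctor.conjHom_apply, hGF, isoOfGObj, eq_mul_inv_of_mul_eq hη]
  group

theorem conjHom_F_conjHom_G (v : aut A) :
    E.F.conjHom he (E.G.conjHom (E.isoOfGObj_isIso he) v) = v := by
  have hv := mem_aut (M := A) v.2
  have hd := E.isoOfGObj_isIso he
  have hFG : E.F.map (selfCopy B) (selfCopy B) (E.G.conjHom hd v)
      (mem_aut (E.G.conjHom hd v).2) =
      E.F.map _ (selfCopy B) _ hd * E.F.map _ _ _ (E.G.map_iso _ _ _ hv) *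
        (E.F.map _ (selfCopy B) _ hd)⁻¹ :=
    E.F.map_conj hd (E.G.map_iso _ _ _ hv) _
  have hFd : (E.F.map _ (selfCopy B) _ hd)⁻¹ = E.ε (selfCopy A) * e := by
    have hinv : (E.isoOfGObj he)⁻¹ =
        E.G.map (E.F.obj (selfCopy B)) (selfCopy A) e he * E.η (selfCopy B) := inv_inv _
    rw [← E.F.map_inv hd (isIso_inv hd),
      E.F.map_congr hinv _ (isIso_mul (E.G.map_iso _ _ _ he) (E.η_iso _)),
      E.F.map_mul (E.η_iso _), E.triangleF]
    exact E.ε_nat _ _ _ he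
  have hε : E.F.map _ _ _ (E.G.map_iso _ _ _ hv) * E.ε (selfCopy A) = E.ε (selfCopy A) * v :=
    E.ε_nat (selfCopy A) (selfCopy A) _ hv
  ext1
  rw [IsoFunctor.conjHom_apply, hFG, inv_eq_iff_eq_inv.mp hFd, eq_mul_inv_of_mul_eq hε]
  group

end AdjEquiv

/-- **Theorem 1.13.** Let `B` and `A` be countable structures.  For every Borel
adjoint equivalence of categories `(F, G, η, ε)` between `Iso(B)` and `Iso(A)` there
is an infinitary bi-interpretation `(I, J)` between `A` and `B` such that `F` is
naturally isomorphic to `F_I` and `G` is naturally isomorphic to `F_J`. -/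
theorem adj_equiv_to_biinterp (LA LB : ℕ → ℕ) (A : Str LA) (B : Str LB)
    (E : AdjEquiv B A) (hE : IsBorelAdjEquiv E) :
    ∃ (bi : BiInterp A B) (FI : IsoFunctor B A) (FJ : IsoFunctor A B)
      (τ : Copy B → ℕ → List ℕ) (ρ : Copy A → ℕ → List ℕ),
      InducedBy bi.I FI τ ∧ InducedBy bi.J FJ ρ ∧ NatIso E.F FI ∧ NatIso E.G FJ := by
  obtain ⟨hF, hG, -, -⟩ := hE
  obtain ⟨e, he⟩ := (E.F.obj (selfCopy B)).2
  let P := SupportedHom.ofSupports _ (hF.exists_support_conjHom he)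
  let Q := SupportedHom.ofSupports _ (hG.exists_support_conjHom (E.isoOfGObj_isIso he))
  exact ⟨P.biInterp Q (E.conjHom_G_conjHom_F he) (E.conjHom_F_conjHom_G he), P.functor, Q.functor,
    P.tau, Q.tau, P.inducedBy, Q.inducedBy, P.natIso E.F he rfl,
    Q.natIso E.G (E.isoOfGObj_isIso he) rfl⟩

end Paper
end
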